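/- arXiv:2002.07267 — 10 statements merged into one kernel-verified Lean document; each statement's English description precedes it below -/
import Mathlib

section
/- Let τ > 0, let σ₀ ∈ ℝ, and let a₁, a₀, α₁, α₀ ∈ ℝ. Then σ₀ is a root of multiplicity exactly 4 of Δ (i.e., Δ(σ₀) = Δ'(σ₀) = Δ''(σ₀) = Δ'''(σ₀) = 0 and Δ⁽⁴⁾(σ₀) ≠ 0) if and only if a₁ = −4/τ − 2σ₀, a₀ = 6/τ² + 4σ₀/τ + σ₀², α₁ = −(2/τ)e^{σ₀τ}, and α₀ = (2/τ)e^{σ₀τ}(σ₀ − 3/τ). -/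
open Complex

/-!
Write Δ(s) = P(s) + e^{-sτ} L(s) with P(s) = s² + a₁s + a₀ and L(s) = α₁s + α₀. By Leibniz's rule
Δ⁽ᵏ⁾(σ) = P⁽ᵏ⁾(σ) + e^{-στ}((-τ)ᵏ L(σ) + k(-τ)ᵏ⁻¹ α₁), and P''' = 0. So Δ'''(σ₀) = 0 says
τ L(σ₀) = 3α₁; then Δ''(σ₀) = 0 says e^{-σ₀τ} τ α₁ = -2, which fixes α₁ and α₀, and Δ'(σ₀) = 0,
Δ(σ₀) = 0 fix a₁ and a₀. With these values Δ⁽⁴⁾(σ₀) = 2τ², so the root is never of higher order.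
-/

theorem HasDerivAt.cexp_neg_mul_mul {L : ℂ → ℂ} {L' s : ℂ} (T : ℂ) (hL : HasDerivAt L L' s) :
    HasDerivAt (fun s => cexp (-s * T) * L s) (cexp (-s * T) * (-T * L s + L')) s := by
  have hexp : HasDerivAt (fun s => cexp (-s * T)) (cexp (-s * T) * -T) s :=
    ((hasDerivAt_neg s).mul_const T).cexp.congr_deriv (by ring)
  exact (hexp.mul hL).congr_deriv (by ring)

theorem iteratedDeriv_cexp_neg_mul_mul_affine (T C D : ℂ) (k : ℕ) :
    iteratedDeriv k (fun s => cexp (-s * T) * (C * s + D)) =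
      fun s => cexp (-s * T) * ((-T) ^ k * (C * s + D) + k * (-T) ^ (k - 1) * C) := by
  induction k with
  | zero => simp
  | succ k ih =>
    rw [iteratedDeriv_succ, ih]
    funext s
    have hL : HasDerivAt (fun s => (-T) ^ k * (C * s + D) + k * (-T) ^ (k - 1) * C)
        ((-T) ^ k * C) s := by
      simpa using ((((hasDerivAt_id s).const_mul C).add_const D).const_mul ((-T) ^ k)).add_const
        (k * (-T) ^ (k - 1) * C)
    rw [(hL.cexp_neg_mul_mul T).deriv]
    rcases k with _ | k
    · simp
    · push_cast
      ring

theorem iteratedDeriv_quadratic (A B s : ℂ) (k : ℕ) :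
    iteratedDeriv k (fun s => s ^ 2 + A * s + B) s =
      if k = 0 then s ^ 2 + A * s + B else if k = 1 then 2 * s + A else if k = 2 then 2 else 0 := by
  rw [iteratedDeriv_fun_add (by fun_prop) (by fun_prop),
    iteratedDeriv_fun_add (by fun_prop) (by fun_prop)]
  -- stated apart because `simp` eta-reduces `fun s => A * s`, which the lemma then misses
  have hlin := iteratedDeriv_const_mul_field (x := s) (n := k) A (fun s => s)
  simp only [iteratedDeriv_fun_id] at hlin
  obtain _ | _ | _ | k := k <;> simp [hlin, iteratedDeriv_const]

theorem iteratedDeriv_quasipoly (A B T C D s : ℂ) (k : ℕ) :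
    iteratedDeriv k (fun s => s ^ 2 + A * s + B + cexp (-s * T) * (C * s + D)) s =
      iteratedDeriv k (fun s => s ^ 2 + A * s + B) s +
        cexp (-s * T) * ((-T) ^ k * (C * s + D) + k * (-T) ^ (k - 1) * C) := by
  rw [iteratedDeriv_fun_add (by fun_prop) (by fun_prop), iteratedDeriv_cexp_neg_mul_mul_affine]

theorem quasipoly_root_equations_iff {K : Type*} [Field K] [NeZero (2 : K)]
    {τ σ a₁ a₀ α₁ α₀ e : K} (hτ : τ ≠ 0) (he : e ≠ 0) :
    (σ ^ 2 + a₁ * σ + a₀ + e * (α₁ * σ + α₀) = 0 ∧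
      2 * σ + a₁ + e * (-(τ * (α₁ * σ + α₀)) + α₁) = 0 ∧
      2 + e * (τ ^ 2 * (α₁ * σ + α₀) + -(2 * τ * α₁)) = 0 ∧
      (-τ) ^ 3 * (α₁ * σ + α₀) + 3 * τ ^ 2 * α₁ = 0 ∧
      ¬τ ^ 4 * (α₁ * σ + α₀) + 4 * (-τ) ^ 3 * α₁ = 0) ↔
    (a₁ = -4 / τ - 2 * σ ∧ a₀ = 6 / τ ^ 2 + 4 * σ / τ + σ ^ 2 ∧
      α₁ = -(2 / τ * e⁻¹) ∧ α₀ = 2 / τ * e⁻¹ * (σ - 3 / τ)) := by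
  constructor
  · rintro ⟨h0, h1, h2, h3, -⟩
    have hv : τ * (α₁ * σ + α₀) = 3 * α₁ := by
      apply mul_left_cancel₀ (pow_ne_zero 2 hτ)
      linear_combination -h3
    have hc : e * τ * α₁ = -2 := by linear_combination h2 - e * τ * hv
    have ha₁ : a₁ * τ = -4 - 2 * τ * σ := by linear_combination τ * h1 + e * τ * hv + 2 * hc
    refine ⟨?_, ?_, ?_, ?_⟩
    · field_simp
      linear_combination ha₁
    · field_simp
      linear_combination τ ^ 2 * h0 - e * τ * hv - 3 * hc - σ * τ * ha₁
    · field_simp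
      linear_combination hc
    · field_simp
      linear_combination e * τ * hv - τ * σ * hc + 3 * hc
  · rintro ⟨rfl, rfl, rfl, rfl⟩
    refine ⟨by field_simp; ring, by field_simp; ring, by field_simp; ring, by field_simp; ring, ?_⟩
    field_simp
    ring_nf
    exact mul_ne_zero (pow_ne_zero 2 hτ) two_ne_zero

/-- For the quasipolynomial Δ(s) = s² + a₁s + a₀ + e^{−sτ}(α₁s + α₀) with
τ > 0, a real number σ₀ is a root of multiplicity exactly 4 of Δ if and only if the
coefficients are given by the stated formulas. -/
theorem real_root_multiplicity_four_iff
    (τ σ₀ a₁ a₀ α₁ α₀ : ℝ) (hτ : 0 < τ)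
    (Δ : ℂ → ℂ)
    (hΔ : ∀ s : ℂ, Δ s = s ^ 2 + a₁ * s + a₀ + Complex.exp (-s * τ) * (α₁ * s + α₀)) :
    (Δ σ₀ = 0 ∧ deriv Δ σ₀ = 0 ∧ iteratedDeriv 2 Δ σ₀ = 0 ∧ iteratedDeriv 3 Δ σ₀ = 0 ∧
      iteratedDeriv 4 Δ σ₀ ≠ 0)
    ↔ (a₁ = -4 / τ - 2 * σ₀ ∧
       a₀ = 6 / τ ^ 2 + 4 * σ₀ / τ + σ₀ ^ 2 ∧
       α₁ = -(2 / τ) * Real.exp (σ₀ * τ) ∧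
       α₀ = (2 / τ) * Real.exp (σ₀ * τ) * (σ₀ - 3 / τ)) := by
  obtain rfl : Δ = _ := funext hΔ
  rw [← iteratedDeriv_one]
  simp only [iteratedDeriv_quasipoly, iteratedDeriv_quadratic]
  norm_num
  rw [quasipoly_root_equations_iff (ofReal_ne_zero.mpr hτ.ne') (Complex.exp_ne_zero _)]
  simp only [← Complex.exp_neg, neg_neg, ← ofReal_mul, ← ofReal_exp]
  norm_cast
end

section
/- Let τ > 0, let s₀ = σ₀ + iθ₀ with σ₀, θ₀ ∈ ℝ and θ₀ ≠ 0, and let a₁, a₀, α₁, α₀ ∈ ℝ. Then s₀ and its complex conjugate are both roots of multiplicity exactly 2 of Δ (i.e., Δ and Δ' vanish at s₀ and at conj(s₀), while Δ'' does not) if and only if, setting D = τ²θ₀² − sin²(τθ₀), one has a₁ = −2σ₀ − 2θ₀(τθ₀ − sin(τθ₀)cos(τθ₀))/D, a₀ = σ₀² + 2σ₀θ₀(τθ₀ − sin(τθ₀)cos(τθ₀))/D + θ₀²(τ²θ₀² + sin²(τθ₀))/D, α₁ = 2θ₀e^{σ₀τ}(τθ₀cos(τθ₀) − sin(τθ₀))/D,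 and α₀ = 2θ₀e^{σ₀τ}(σ₀(sin(τθ₀) − τθ₀cos(τθ₀)) − τθ₀²sin(τθ₀))/D. -/
open Complex ComplexConjugate

/-!
Since `Δ` has real coefficients it commutes with conjugation, and so do its derivatives; hence the
conditions at `conj s₀` repeat those at `s₀`. The substitution `s = σ₀ + z` turns `Δ` into a
quasipolynomial of the same shape with coefficients `b₁ = a₁ + 2σ₀`, `b₀ = σ₀² + a₁σ₀ + a₀`,
`β₁ = e^{-σ₀τ} α₁`, `β₀ = e^{-σ₀τ} (α₁σ₀ + α₀)`, and moves the root to `iθ₀`. There the real and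
imaginary parts of `Δ = Δ' = 0` form a linear system in `(b₁, b₀, β₁, β₀)` of determinant
`D = τ²θ₀² - sin²(τθ₀)`, which is positive because `|sin x| < |x|` for `x ≠ 0`. At its unique
solution `Δ''(iθ₀) ≠ 0`: a vanishing real part forces `sin(τθ₀) = τθ₀ cos(τθ₀)`, after which the
imaginary part is a nonzero multiple of `sin²(τθ₀)`, and `sin` and `cos` cannot vanish together.
-/

section Multiplicity

variable {𝕜 F : Type*} [NontriviallyNormedField 𝕜] [NormedAddCommGroup F] [NormedSpace 𝕜 F]

def IsRootOfMultiplicity (f : 𝕜 → F) (z : 𝕜) (m : ℕ) : Prop :=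
  (∀ k < m, iteratedDeriv k f z = 0) ∧ iteratedDeriv m f z ≠ 0

theorem isRootOfMultiplicity_two_iff (f : 𝕜 → F) (z : 𝕜) :
    IsRootOfMultiplicity f z 2 ↔ f z = 0 ∧ deriv f z = 0 ∧ iteratedDeriv 2 f z ≠ 0 := by
  simp [IsRootOfMultiplicity, Nat.le_one_iff_eq_zero_or_eq_one, or_imp, forall_and, and_assoc]

theorem isRootOfMultiplicity_comp_const_add (f : 𝕜 → F) (a z : 𝕜) (m : ℕ) :
    IsRootOfMultiplicity (fun w => f (a + w)) z m ↔ IsRootOfMultiplicity f (a + z) m := by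
  simp only [IsRootOfMultiplicity, iteratedDeriv_comp_const_add]

end Multiplicity

theorem iteratedDeriv_apply_conj {f : ℂ → ℂ} (hf : ∀ z, f (conj z) = conj (f z)) (n : ℕ) :
    ∀ z, iteratedDeriv n f (conj z) = conj (iteratedDeriv n f z) := by
  induction n with
  | zero => simpa using hf
  | succ n ih =>
    intro z
    have hg : conj ∘ iteratedDeriv n f ∘ conj = iteratedDeriv n f := funext fun w => by simp [ih]
    rw [iteratedDeriv_succ]
    conv_lhs => rw [← hg, deriv_conj_conj]
    simp

theorem isRootOfMultiplicity_conj_iff {f : ℂ → ℂ} (hf : ∀ z, f (conj z) = conj (f z)) (z : ℂ)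
    (m : ℕ) : IsRootOfMultiplicity f (conj z) m ↔ IsRootOfMultiplicity f z m := by
  simp [IsRootOfMultiplicity, iteratedDeriv_apply_conj hf]

noncomputable def quasiPoly (τ p₂ p₁ p₀ q₁ q₀ : ℝ) (s : ℂ) : ℂ :=
  p₂ * s ^ 2 + p₁ * s + p₀ + exp (-s * τ) * (q₁ * s + q₀)

namespace quasiPoly

variable (τ p₂ p₁ p₀ q₁ q₀ : ℝ)

theorem hasDerivAt (z : ℂ) :
    HasDerivAt (quasiPoly τ p₂ p₁ p₀ q₁ q₀)
      (quasiPoly τ 0 (2 * p₂) p₁ (-τ * q₁) (q₁ - τ * q₀) z) z := by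
  have hid := hasDerivAt_id z
  have hpoly := (((hasDerivAt_pow 2 z).const_mul (p₂ : ℂ)).add (hid.const_mul (p₁ : ℂ))).add_const
    (p₀ : ℂ)
  have hexp := (hid.neg.mul_const (τ : ℂ)).cexp.mul ((hid.const_mul (q₁ : ℂ)).add_const (q₀ : ℂ))
  exact (hpoly.add hexp).congr_deriv (by simp only [quasiPoly, Pi.neg_apply, id]; push_cast; ring)

theorem deriv_eq :
    deriv (quasiPoly τ p₂ p₁ p₀ q₁ q₀) = quasiPoly τ 0 (2 * p₂) p₁ (-τ * q₁) (q₁ - τ * q₀) :=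
  funext fun z => (hasDerivAt τ p₂ p₁ p₀ q₁ q₀ z).deriv

theorem iteratedDeriv_two :
    iteratedDeriv 2 (quasiPoly τ p₂ p₁ p₀ q₁ q₀) =
      quasiPoly τ 0 0 (2 * p₂) (τ ^ 2 * q₁) (τ ^ 2 * q₀ - 2 * τ * q₁) := by
  rw [iteratedDeriv_succ, iteratedDeriv_one, deriv_eq, deriv_eq]
  congr 1 <;> ring

theorem apply_conj (z : ℂ) :
    quasiPoly τ p₂ p₁ p₀ q₁ q₀ (conj z) = conj (quasiPoly τ p₂ p₁ p₀ q₁ q₀ z) := by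
  simp [quasiPoly, ← exp_conj]

theorem const_add (σ : ℝ) :
    (fun z => quasiPoly τ p₂ p₁ p₀ q₁ q₀ (σ + z)) =
      quasiPoly τ p₂ (p₁ + 2 * p₂ * σ) (p₂ * σ ^ 2 + p₁ * σ + p₀)
        (Real.exp (-σ * τ) * q₁) (Real.exp (-σ * τ) * (q₁ * σ + q₀)) := by
  funext z
  simp only [quasiPoly]
  push_cast
  rw [show -(σ + z) * (τ : ℂ) = -σ * τ + -z * τ by ring, exp_add]
  ring

theorem re_ofReal_mul_I (θ : ℝ) :
    (quasiPoly τ p₂ p₁ p₀ q₁ q₀ (θ * I)).re =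
      p₀ - p₂ * θ ^ 2 + Real.cos (τ * θ) * q₀ + Real.sin (τ * θ) * θ * q₁ := by
  simp [quasiPoly, exp_re, exp_im, pow_two, mul_comm θ τ]
  ring

theorem im_ofReal_mul_I (θ : ℝ) :
    (quasiPoly τ p₂ p₁ p₀ q₁ q₀ (θ * I)).im =
      p₁ * θ + Real.cos (τ * θ) * θ * q₁ - Real.sin (τ * θ) * q₀ := by
  simp [quasiPoly, exp_re, exp_im, pow_two, mul_comm θ τ]
  ring

theorem double_root_ofReal_mul_I_iff (b₁ b₀ β₁ β₀ θ D : ℝ)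
    (hD : D = τ ^ 2 * θ ^ 2 - Real.sin (τ * θ) ^ 2) (hD0 : D ≠ 0) :
    quasiPoly τ 1 b₁ b₀ β₁ β₀ (θ * I) = 0 ∧ deriv (quasiPoly τ 1 b₁ b₀ β₁ β₀) (θ * I) = 0 ↔
      b₁ = -2 * θ * (τ * θ - Real.sin (τ * θ) * Real.cos (τ * θ)) / D ∧
      b₀ = θ ^ 2 * (τ ^ 2 * θ ^ 2 + Real.sin (τ * θ) ^ 2) / D ∧
      β₁ = 2 * θ * (τ * θ * Real.cos (τ * θ) - Real.sin (τ * θ)) / D ∧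
      β₀ = -2 * τ * θ ^ 3 * Real.sin (τ * θ) / D := by
  rw [deriv_eq, Complex.ext_iff, Complex.ext_iff, re_ofReal_mul_I, im_ofReal_mul_I,
    re_ofReal_mul_I, im_ofReal_mul_I, zero_re, zero_im]
  set c := Real.cos (τ * θ)
  set s := Real.sin (τ * θ)
  have hpy : s ^ 2 + c ^ 2 = 1 := Real.sin_sq_add_cos_sq _
  constructor
  · rintro ⟨⟨h₁, h₂⟩, h₃, h₄⟩
    -- Cramer's rule for the `2 × 2` system `θ h₃ - h₂`, `h₄`, which does not involve `b₁, b₀`.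
    have hβ₁ : β₁ * D = 2 * θ * (τ * θ * c - s) := by
      linear_combination β₁ * hD + (s - τ * θ * c) * h₄ - s * τ * θ * h₃ + s * τ * h₂
        - τ ^ 2 * θ ^ 2 * β₁ * hpy
    have hβ₀ : β₀ * D = -2 * τ * θ ^ 3 * s := by
      linear_combination β₀ * hD - (τ * θ * c + s) * (θ * h₃ - h₂) + s * τ * θ ^ 2 * h₄
        - τ ^ 2 * θ ^ 2 * β₀ * hpy
    have hb₁ : b₁ * D = -2 * θ * (τ * θ - s * c) := by
      linear_combination D * h₃ + (s * τ * θ - c) * hβ₁ + c * τ * hβ₀ - 2 * τ * θ ^ 2 * hpy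
    have hb₀ : b₀ * D = θ ^ 2 * (τ ^ 2 * θ ^ 2 + s ^ 2) := by
      linear_combination D * h₁ - c * hβ₀ - s * θ * hβ₁ + θ ^ 2 * hD
    exact ⟨eq_div_of_mul_eq hD0 hb₁, eq_div_of_mul_eq hD0 hb₀, eq_div_of_mul_eq hD0 hβ₁,
      eq_div_of_mul_eq hD0 hβ₀⟩
  · rintro ⟨hb₁, hb₀, hβ₁, hβ₀⟩
    rw [eq_div_iff hD0] at hb₁ hb₀ hβ₁ hβ₀
    refine ⟨⟨?_, ?_⟩, ?_, ?_⟩ <;> refine (mul_eq_zero.mp ?_).resolve_left hD0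
    · linear_combination hb₀ + c * hβ₀ + s * θ * hβ₁ - θ ^ 2 * hD
    · linear_combination θ * hb₁ + c * θ * hβ₁ - s * hβ₀ + 2 * τ * θ ^ 3 * hpy
    · linear_combination hb₁ + (c - s * τ * θ) * hβ₁ - c * τ * hβ₀ + 2 * τ * θ ^ 2 * hpy
    · linear_combination s * τ * hβ₀ - (c * τ * θ + s) * hβ₁ + 2 * θ * hD
        - 2 * τ ^ 2 * θ ^ 3 * hpy

theorem iteratedDeriv_two_ofReal_mul_I_ne_zero (b₁ b₀ β₁ β₀ θ D : ℝ)
    (hD : D = τ ^ 2 * θ ^ 2 - Real.sin (τ * θ) ^ 2) (hD0 : D ≠ 0)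
    (hβ₁ : β₁ = 2 * θ * (τ * θ * Real.cos (τ * θ) - Real.sin (τ * θ)) / D)
    (hβ₀ : β₀ = -2 * τ * θ ^ 3 * Real.sin (τ * θ) / D) :
    iteratedDeriv 2 (quasiPoly τ 1 b₁ b₀ β₁ β₀) (θ * I) ≠ 0 := by
  have hφ : τ * θ ≠ 0 := by
    intro h
    apply hD0
    rw [hD, h, Real.sin_zero]
    linear_combination τ * θ * h
  rw [iteratedDeriv_two, Ne, Complex.ext_iff, re_ofReal_mul_I, im_ofReal_mul_I, zero_re, zero_im]
  set c := Real.cos (τ * θ)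
  set s := Real.sin (τ * θ)
  have hpy : s ^ 2 + c ^ 2 = 1 := Real.sin_sq_add_cos_sq _
  rw [eq_div_iff hD0] at hβ₁ hβ₀
  rintro ⟨hre, him⟩
  have hs : s = τ * θ * c := by
    have : (τ * θ * c - s) ^ 2 = 0 := by
      linear_combination (-D / 2) * hre + (c * τ ^ 2 / 2) * hβ₀
        + (s * θ * τ ^ 2 / 2 - c * τ) * hβ₁ + hD - τ ^ 2 * θ ^ 2 * hpy
    linear_combination -(pow_eq_zero_iff two_ne_zero).mp this
  have hs0 : (τ * θ) ^ 3 * s ^ 2 = 0 := by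
    linear_combination (D / 2) * him - (c * θ * τ ^ 2 / 2 + s * τ) * hβ₁ + (s * τ ^ 2 / 2) * hβ₀
      + τ * θ * (τ * θ * c + 2 * s) * hs
  have hs' : s = 0 := pow_eq_zero_iff two_ne_zero |>.mp <|
    (mul_eq_zero.mp hs0).resolve_left (pow_ne_zero 3 hφ)
  have hc : c = 0 := by
    rw [hs'] at hs
    exact (mul_eq_zero.mp hs.symm).resolve_left hφ
  simp [hs', hc] at hpy

end quasiPoly

theorem coeff_formulas_iff_shifted (a₁ a₀ α₁ α₀ σ τ θ c s D : ℝ) :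
    (a₁ = -2 * σ - 2 * θ * (τ * θ - s * c) / D ∧
      a₀ = σ ^ 2 + 2 * σ * θ * (τ * θ - s * c) / D + θ ^ 2 * (τ ^ 2 * θ ^ 2 + s ^ 2) / D ∧
      α₁ = 2 * θ * Real.exp (σ * τ) * (τ * θ * c - s) / D ∧
      α₀ = 2 * θ * Real.exp (σ * τ) * (σ * (s - τ * θ * c) - τ * θ ^ 2 * s) / D) ↔
    (a₁ + 2 * σ = -2 * θ * (τ * θ - s * c) / D ∧
      σ ^ 2 + a₁ * σ + a₀ = θ ^ 2 * (τ ^ 2 * θ ^ 2 + s ^ 2) / D ∧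
      Real.exp (-σ * τ) * α₁ = 2 * θ * (τ * θ * c - s) / D ∧
      Real.exp (-σ * τ) * (α₁ * σ + α₀) = -2 * τ * θ ^ 3 * s / D) := by
  have hE : Real.exp (-σ * τ) * Real.exp (σ * τ) = 1 := by rw [← Real.exp_add]; simp
  set E := Real.exp (-σ * τ)
  set K := Real.exp (σ * τ)
  constructor
  · rintro ⟨h₁, h₀, g₁, g₀⟩
    exact ⟨by linear_combination h₁, by linear_combination σ * h₁ + h₀,
      by linear_combination E * g₁ + 2 * θ * (τ * θ * c - s) / D * hE,
      by linear_combination E * σ * g₁ + E * g₀ - 2 * τ * θ ^ 3 * s / D * hE⟩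
  · rintro ⟨h₁, h₀, g₁, g₀⟩
    exact ⟨by linear_combination h₁, by linear_combination h₀ - σ * h₁,
      by linear_combination K * g₁ - α₁ * hE,
      by linear_combination K * g₀ - σ * K * g₁ - α₀ * hE⟩

/-- For the quasipolynomial Δ(s) = s² + a₁s + a₀ + e^{−sτ}(α₁s + α₀) with
τ > 0 and s₀ = σ₀ + iθ₀ with θ₀ ≠ 0, s₀ and its conjugate are roots of multiplicity
exactly 2 of Δ if and only if the coefficients are given by the stated formulas. -/
theorem complex_pair_multiplicity_two_iff
    (τ σ₀ θ₀ a₁ a₀ α₁ α₀ D : ℝ) (hτ : 0 < τ) (hθ₀ : θ₀ ≠ 0)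
    (s₀ : ℂ) (hs₀ : s₀ = σ₀ + θ₀ * Complex.I)
    (hD : D = τ ^ 2 * θ₀ ^ 2 - Real.sin (τ * θ₀) ^ 2)
    (Δ : ℂ → ℂ)
    (hΔ : ∀ s : ℂ, Δ s = s ^ 2 + a₁ * s + a₀ + Complex.exp (-s * τ) * (α₁ * s + α₀)) :
    (Δ s₀ = 0 ∧ deriv Δ s₀ = 0 ∧ iteratedDeriv 2 Δ s₀ ≠ 0 ∧
     Δ (conj s₀) = 0 ∧ deriv Δ (conj s₀) = 0 ∧ iteratedDeriv 2 Δ (conj s₀) ≠ 0)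
    ↔ (a₁ = -2 * σ₀ - 2 * θ₀ * (τ * θ₀ - Real.sin (τ * θ₀) * Real.cos (τ * θ₀)) / D ∧
       a₀ = σ₀ ^ 2 + 2 * σ₀ * θ₀ * (τ * θ₀ - Real.sin (τ * θ₀) * Real.cos (τ * θ₀)) / D
            + θ₀ ^ 2 * (τ ^ 2 * θ₀ ^ 2 + Real.sin (τ * θ₀) ^ 2) / D ∧
       α₁ = 2 * θ₀ * Real.exp (σ₀ * τ) * (τ * θ₀ * Real.cos (τ * θ₀) - Real.sin (τ * θ₀)) / D ∧
       α₀ = 2 * θ₀ * Real.exp (σ₀ * τ) *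
              (σ₀ * (Real.sin (τ * θ₀) - τ * θ₀ * Real.cos (τ * θ₀))
                - τ * θ₀ ^ 2 * Real.sin (τ * θ₀)) / D) := by
  have hΔ' : Δ = quasiPoly τ 1 a₁ a₀ α₁ α₀ := funext fun s => by simp [hΔ, quasiPoly]
  have hΔconj (z : ℂ) : Δ (conj z) = conj (Δ z) := hΔ' ▸ quasiPoly.apply_conj τ 1 a₁ a₀ α₁ α₀ z
  set b₁ := a₁ + 2 * σ₀
  set b₀ := σ₀ ^ 2 + a₁ * σ₀ + a₀
  set β₁ := Real.exp (-σ₀ * τ) * α₁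
  set β₀ := Real.exp (-σ₀ * τ) * (α₁ * σ₀ + α₀)
  have hshift : (fun z => Δ (σ₀ + z)) = quasiPoly τ 1 b₁ b₀ β₁ β₀ := by
    rw [hΔ', quasiPoly.const_add]
    simp only [one_mul, mul_one]
    rfl
  have hD0 : D ≠ 0 := by
    rw [hD, sub_ne_zero, ← mul_pow]
    exact (Real.sin_sq_lt_sq (mul_ne_zero hτ.ne' hθ₀)).ne'
  have hroot := quasiPoly.double_root_ofReal_mul_I_iff τ b₁ b₀ β₁ β₀ θ₀ D hD hD0
  calc _ ↔ IsRootOfMultiplicity Δ s₀ 2 ∧ IsRootOfMultiplicity Δ (conj s₀) 2 := by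
        simp only [isRootOfMultiplicity_two_iff, and_assoc]
    _ ↔ IsRootOfMultiplicity (quasiPoly τ 1 b₁ b₀ β₁ β₀) (θ₀ * I) 2 := by
        rw [isRootOfMultiplicity_conj_iff hΔconj, and_self, hs₀,
          ← isRootOfMultiplicity_comp_const_add, hshift]
    _ ↔ quasiPoly τ 1 b₁ b₀ β₁ β₀ (θ₀ * I) = 0 ∧
        deriv (quasiPoly τ 1 b₁ b₀ β₁ β₀) (θ₀ * I) = 0 := by
        rw [isRootOfMultiplicity_two_iff, ← and_assoc, and_iff_left_iff_imp]
        intro h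
        exact quasiPoly.iteratedDeriv_two_ofReal_mul_I_ne_zero τ b₁ b₀ β₁ β₀ θ₀ D hD hD0
          (hroot.mp h).2.2.1 (hroot.mp h).2.2.2
    _ ↔ _ := hroot.trans (coeff_formulas_iff_shifted a₁ a₀ α₁ α₀ σ₀ τ θ₀ _ _ D).symm
end

section
/- Let τ > 0 and σ₀ ∈ ℝ, and suppose the coefficients of Δ satisfy a₁ = −4/τ − 2σ₀, a₀ = 6/τ² + 4σ₀/τ + σ₀², α₁ = −(2/τ)e^{σ₀τ}, and α₀ = (2/τ)e^{σ₀τ}(σ₀ − 3/τ). Then σ₀ is a strictly dominant root of Δ: Δ(σ₀) = 0 and every s ∈ ℂ with s ≠ σ₀ and Δ(s) = 0 satisfies Re s < σ₀. -/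
/-!
Substituting `w = τ (s - σ₀)` turns `τ² Δ(s)` into `F(w) = w² - 4w + 6 - e^{-w}(2w + 6)`, so it
suffices to show that `F` has no zero `w ≠ 0` with `Re w ≥ 0`. Integrating by parts four times gives
`F(w) = w⁴ ∫₀¹ e^{-wt} t(1-t)² dt`. If `|Im w| ≤ 3`, rotating the integral by `e^{i Im w / 2}` makes its
integrand have positive real part, since `|Im w| (1/2 - t)` stays below `π/2`. If `|Im w| > 3`,
the quadratic term dominates: `|e^{-w}(2w + 6)| < |w² - 4w + 6|`.
-/

open Complex intervalIntegral

/-- `τ² Δ(s)` in the variable `w = τ (s - σ₀)`. -/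
noncomputable def normalizedChar (w : ℂ) : ℂ := w ^ 2 - 4 * w + 6 - exp (-w) * (2 * w + 6)

/-- The polynomial factor is `∑ₖ w^{3-k} p⁽ᵏ⁾` for `p(u) = u (1 - u)²`, so the derivative telescopes. -/
lemma hasDerivAt_peano_antideriv (w u : ℂ) :
    HasDerivAt (fun u => -exp (-w * u) *
        (w ^ 3 * (u - 2 * u ^ 2 + u ^ 3) + w ^ 2 * (1 - 4 * u + 3 * u ^ 2) + w * (6 * u - 4) + 6))
      (exp (-w * u) * (w ^ 4 * (u * (1 - u) ^ 2))) u := by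
  have hexp : HasDerivAt (fun u => exp (-w * u)) (exp (-w * u) * -w) u := by
    simpa using ((hasDerivAt_id u).const_mul (-w)).cexp
  have h1 := hasDerivAt_id u
  have h2 := hasDerivAt_pow 2 u
  have h3 := hasDerivAt_pow 3 u
  have hpoly := ((((h1.sub (h2.const_mul 2)).add h3).const_mul (w ^ 3)).add
      (((h1.const_mul 4).const_sub 1).add (h2.const_mul 3) |>.const_mul (w ^ 2))).add
      (((h1.const_mul 6).sub_const 4).const_mul w) |>.add_const 6
  exact (hexp.neg.mul hpoly).congr_deriv (by
    simp only [Pi.add_apply, Pi.sub_apply, Pi.neg_apply, id_eq, Nat.cast_ofNat, Nat.add_one_sub_one,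
      pow_one]
    ring)

lemma pow_four_mul_peano_integral (w : ℂ) :
    w ^ 4 * ∫ t in (0 : ℝ)..1, exp (-w * t) * (t * (1 - t) ^ 2) = normalizedChar w := by
  rw [← integral_const_mul, integral_eq_sub_of_hasDerivAt
    (fun t _ => ((hasDerivAt_peano_antideriv w t).comp_ofReal).congr_deriv (by ring))]
  · simp only [ofReal_one, ofReal_zero, mul_one, mul_zero, exp_zero, normalizedChar]
    ring
  · apply Continuous.intervalIntegrable; fun_prop

lemma re_peano_integrand (w : ℂ) (t : ℝ) :
    (exp (I * (w.im / 2)) * (exp (-w * t) * (t * (1 - t) ^ 2))).re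
      = t * (1 - t) ^ 2 * (Real.exp (-w.re * t) * Real.cos (w.im / 2 - w.im * t)) := by
  rw [← mul_assoc, ← Complex.exp_add, mul_comm, ← ofReal_one, ← ofReal_sub, ← ofReal_pow,
    ← ofReal_mul, re_ofReal_mul, exp_re]
  congr 3 <;> simp [mul_re, mul_im, sub_eq_add_neg]

lemma peano_integral_ne_zero_of_abs_im_le {w : ℂ} (hw : |w.im| ≤ 3) :
    ∫ t in (0 : ℝ)..1, exp (-w * t) * (t * (1 - t) ^ 2) ≠ 0 := by
  intro h0
  have hint : IntervalIntegrable (fun t : ℝ => exp (I * (w.im / 2)) * (exp (-w * t) * (t * (1 - t) ^ 2)))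
      MeasureTheory.volume 0 1 := by
    apply Continuous.intervalIntegrable; fun_prop
  have hre := reCLM.intervalIntegral_comp_comm hint
  simp only [reCLM_apply, re_peano_integrand, integral_const_mul, h0, mul_zero, zero_re] at hre
  refine (intervalIntegral_pos_of_pos_on ?_ (fun t ht => ?_) zero_lt_one).ne' hre
  · apply Continuous.intervalIntegrable; fun_prop
  · obtain ⟨ht0, ht1⟩ := ht
    have hcos : 0 < Real.cos (w.im / 2 - w.im * t) := by
      apply Real.cos_pos_of_mem_Ioo
      constructor <;> nlinarith [Real.pi_gt_three, abs_le.1 hw]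
    have : 0 < 1 - t := by linarith
    positivity

lemma sq_linear_lt_exp_mul_sq_quadratic {x y : ℝ} (hx : 0 ≤ x) (hy : 9 ≤ y ^ 2) :
    (2 * x + 6) ^ 2 + 4 * y ^ 2
      < Real.exp (2 * x) * ((x ^ 2 - 4 * x + 6 - y ^ 2) ^ 2 + y ^ 2 * (2 * x - 4) ^ 2) := by
  have hexp : 1 + 2 * x + 2 * x ^ 2 + 4 / 3 * x ^ 3 ≤ Real.exp (2 * x) := by
    have h := Real.sum_le_exp_of_nonneg (by linarith : (0 : ℝ) ≤ 2 * x) 4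
    norm_num [Finset.sum_range_succ, Nat.factorial] at h
    linarith
  have hQ : 0 ≤ (x ^ 2 - 4 * x + 6 - y ^ 2) ^ 2 + y ^ 2 * (2 * x - 4) ^ 2 := by positivity
  nlinarith [mul_le_mul_of_nonneg_right hexp hQ, sq_nonneg (x ^ 2 - 4 * x + 6 - y ^ 2), sq_nonneg (x - 2),
    mul_nonneg hx (sq_nonneg (2 * x - 4)), pow_nonneg hx 3, sq_nonneg (y ^ 2 - 9),
    mul_nonneg hx (sq_nonneg (x ^ 2 - 4 * x + 6 - y ^ 2))]

lemma norm_exp_neg_mul_lt_of_abs_im_gt {w : ℂ} (hre : 0 ≤ w.re) (him : 3 < |w.im|) :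
    ‖exp (-w) * (2 * w + 6)‖ < ‖w ^ 2 - 4 * w + 6‖ := by
  have hy : 9 ≤ w.im ^ 2 := by nlinarith [sq_abs w.im, abs_nonneg w.im]
  have hlin : ‖2 * w + 6‖ ^ 2 = (2 * w.re + 6) ^ 2 + 4 * w.im ^ 2 := by
    rw [← normSq_eq_norm_sq, normSq_apply]
    simp only [add_re, mul_re, re_ofNat, im_ofNat, zero_mul, sub_zero, add_im, mul_im, add_zero]
    ring
  have hquad : ‖w ^ 2 - 4 * w + 6‖ ^ 2
      = (w.re ^ 2 - 4 * w.re + 6 - w.im ^ 2) ^ 2 + w.im ^ 2 * (2 * w.re - 4) ^ 2 := by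
    rw [← normSq_eq_norm_sq, normSq_apply]
    simp only [pow_two, add_re, sub_re, mul_re, re_ofNat, im_ofNat, zero_mul, sub_zero, add_im, sub_im,
      mul_im, add_zero]
    ring
  have hexp : Real.exp (-w.re) ^ 2 * Real.exp (2 * w.re) = 1 := by
    rw [← Real.exp_nat_mul, ← Real.exp_add]; norm_num
  rw [← sq_lt_sq₀ (norm_nonneg _) (norm_nonneg _), norm_mul, mul_pow, norm_exp, neg_re, hlin, hquad]
  calc Real.exp (-w.re) ^ 2 * ((2 * w.re + 6) ^ 2 + 4 * w.im ^ 2)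
      < Real.exp (-w.re) ^ 2 * (Real.exp (2 * w.re) *
          ((w.re ^ 2 - 4 * w.re + 6 - w.im ^ 2) ^ 2 + w.im ^ 2 * (2 * w.re - 4) ^ 2)) := by
        gcongr; exact sq_linear_lt_exp_mul_sq_quadratic hre hy
    _ = _ := by rw [← mul_assoc, hexp, one_mul]

lemma normalizedChar_ne_zero {w : ℂ} (hw : w ≠ 0) (hre : 0 ≤ w.re) : normalizedChar w ≠ 0 := by
  rcases le_or_gt |w.im| 3 with him | him
  · rw [← pow_four_mul_peano_integral]
    exact mul_ne_zero (pow_ne_zero 4 hw) (peano_integral_ne_zero_of_abs_im_le him)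
  · rw [normalizedChar, sub_ne_zero]
    exact fun h => (norm_exp_neg_mul_lt_of_abs_im_gt hre him).ne' (congrArg norm h)

lemma sq_mul_quasipoly_eq_normalizedChar {τ σ₀ a₁ a₀ α₁ α₀ : ℝ} (hτ : τ ≠ 0)
    (ha₁ : a₁ = -4 / τ - 2 * σ₀)
    (ha₀ : a₀ = 6 / τ ^ 2 + 4 * σ₀ / τ + σ₀ ^ 2)
    (hα₁ : α₁ = -(2 / τ) * Real.exp (σ₀ * τ))
    (hα₀ : α₀ = (2 / τ) * Real.exp (σ₀ * τ) * (σ₀ - 3 / τ)) (s : ℂ) :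
    (τ : ℂ) ^ 2 * (s ^ 2 + a₁ * s + a₀ + exp (-s * τ) * (α₁ * s + α₀))
      = normalizedChar (τ * (s - σ₀)) := by
  have hshift : exp (-s * τ) * exp (σ₀ * τ) = exp (-(τ * (s - σ₀))) := by
    rw [← Complex.exp_add]; congr 1; ring
  have hτc : (τ : ℂ) ≠ 0 := ofReal_ne_zero.2 hτ
  subst ha₁ ha₀ hα₁ hα₀
  push_cast
  rw [normalizedChar, ← hshift]
  field_simp
  ring

/-- If the coefficients of Δ are chosen so that σ₀ is a real root of maximal
multiplicity 4, then σ₀ is a strictly dominant root of Δ. -/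
theorem real_root_strictly_dominant
    (τ σ₀ a₁ a₀ α₁ α₀ : ℝ) (hτ : 0 < τ)
    (ha₁ : a₁ = -4 / τ - 2 * σ₀)
    (ha₀ : a₀ = 6 / τ ^ 2 + 4 * σ₀ / τ + σ₀ ^ 2)
    (hα₁ : α₁ = -(2 / τ) * Real.exp (σ₀ * τ))
    (hα₀ : α₀ = (2 / τ) * Real.exp (σ₀ * τ) * (σ₀ - 3 / τ))
    (Δ : ℂ → ℂ)
    (hΔ : ∀ s : ℂ, Δ s = s ^ 2 + a₁ * s + a₀ + Complex.exp (-s * τ) * (α₁ * s + α₀)) :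
    Δ σ₀ = 0 ∧ ∀ s : ℂ, s ≠ (σ₀ : ℂ) → Δ s = 0 → s.re < σ₀ := by
  have hτ0 : (τ : ℂ) ≠ 0 := ofReal_ne_zero.2 hτ.ne'
  have hscaled (s : ℂ) : (τ : ℂ) ^ 2 * Δ s = normalizedChar (τ * (s - σ₀)) := by
    rw [hΔ]; exact sq_mul_quasipoly_eq_normalizedChar hτ.ne' ha₁ ha₀ hα₁ hα₀ s
  refine ⟨?_, fun s hs hroot => ?_⟩
  · simpa [normalizedChar, hτ.ne'] using hscaled σ₀
  · by_contra! hge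
    refine normalizedChar_ne_zero (mul_ne_zero hτ0 (sub_ne_zero.2 hs)) ?_ ?_
    · simpa [mul_re] using mul_nonneg hτ.le (sub_nonneg.2 hge)
    · rw [← hscaled, hroot, mul_zero]
end

section
/- Fix τ > 0 and σ₀ ∈ ℝ, and set D(θ₀) = τ²θ₀² − sin²(τθ₀). As θ₀ → 0 with θ₀ ≠ 0, the four functions a₁(θ₀) = −2σ₀ − 2θ₀(τθ₀ − sin(τθ₀)cos(τθ₀))/D(θ₀), a₀(θ₀) = σ₀² + 2σ₀θ₀(τθ₀ − sin(τθ₀)cos(τθ₀))/D(θ₀) + θ₀²(τ²θ₀² + sin²(τθ₀))/D(θ₀), α₁(θ₀) = 2θ₀e^{σ₀τ}(τθ₀cos(τθ₀) − sin(τθ₀))/D(θ₀), and α₀(θ₀) = 2θ₀e^{σ₀τ}(σ₀(sin(τθ₀) − τθ₀cos(τθ₀)) − τθ₀²sin(τθ₀))/D(θ₀) converge respectively to −4/τ − 2σ₀, 6/τ² + 4σ₀/τ + σ₀², −(2/τ)e^{σ₀τ}, and (2/τ)e^{σ₀τ}(σ₀ − 3/τ). -/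
/-!
Put x = τθ₀. Each coefficient is an affine combination of quotients
θ₀ N(τθ₀) / D(θ₀) = τ⁻¹ · x N(x) / (x² − sin² x). Since x² − sin² x = (x − sin x)(x + sin x)
behaves like x⁴/3, such a quotient tends to 3c/τ whenever N(x) ~ c x³, and the numerators
that occur have c = 2/3, −1/3, 2 and 1 by L'Hôpital's rule.
-/

open Filter Topology Real

theorem Filter.Tendsto.comp_mul_left_nhdsNE {G₀ α : Type*} [TopologicalSpace G₀]
    [GroupWithZero G₀] [SeparatelyContinuousMul G₀] {f : G₀ → α} {l : Filter α} {c : G₀}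
    (hc : c ≠ 0) (hf : Tendsto f (𝓝[≠] 0) l) : Tendsto (fun x ↦ f (c * x)) (𝓝[≠] 0) l := by
  refine hf.comp (le_of_eq ?_)
  simpa using (Homeomorph.mulLeft₀ c hc).map_punctured_nhds_eq 0

theorem tendsto_sin_div_self_nhdsNE : Tendsto (fun x ↦ sin x / x) (𝓝[≠] 0) (𝓝 1) := by
  have h := (hasDerivAt_sin 0).tendsto_slope_zero
  simp only [zero_add, sin_zero, sub_zero, cos_zero] at h
  exact h.congr fun x ↦ by ring

theorem tendsto_one_sub_cos_div_sq :
    Tendsto (fun x ↦ (1 - cos x) / x ^ 2) (𝓝[≠] 0) (𝓝 (1 / 2)) := by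
  refine HasDerivAt.lhopital_zero_nhdsNE (f' := sin) (g' := fun x ↦ 2 * x)
    (.of_forall fun x ↦ by simpa using (hasDerivAt_cos x).const_sub 1)
    (.of_forall fun x ↦ by simpa [mul_comm] using hasDerivAt_pow 2 x)
    (eventually_nhdsWithin_of_forall fun x hx ↦ by simpa using hx)
    ((continuous_const.sub continuous_cos).tendsto' 0 0 (by simp) |>.mono_left nhdsWithin_le_nhds)
    ((continuous_pow 2).tendsto' 0 0 (by simp) |>.mono_left nhdsWithin_le_nhds) ?_
  exact (tendsto_sin_div_self_nhdsNE.div_const 2).congr fun x ↦ by ring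

theorem tendsto_self_sub_sin_div_cube :
    Tendsto (fun x ↦ (x - sin x) / x ^ 3) (𝓝[≠] 0) (𝓝 (1 / 6)) := by
  refine HasDerivAt.lhopital_zero_nhdsNE (f' := fun x ↦ 1 - cos x) (g' := fun x ↦ 3 * x ^ 2)
    (.of_forall fun x ↦ (hasDerivAt_id x).sub (hasDerivAt_sin x))
    (.of_forall fun x ↦ by simpa using hasDerivAt_pow 3 x)
    (eventually_nhdsWithin_of_forall fun x hx ↦ by simpa using hx)
    ((continuous_id.sub continuous_sin).tendsto' 0 0 (by simp) |>.mono_left nhdsWithin_le_nhds)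
    ((continuous_pow 3).tendsto' 0 0 (by simp) |>.mono_left nhdsWithin_le_nhds) ?_
  convert tendsto_one_sub_cos_div_sq.div_const 3 using 1
  · ext x; ring
  · norm_num

theorem tendsto_self_sub_sin_mul_cos_div_cube :
    Tendsto (fun x ↦ (x - sin x * cos x) / x ^ 3) (𝓝[≠] 0) (𝓝 (2 / 3)) := by
  convert (tendsto_self_sub_sin_div_cube.comp_mul_left_nhdsNE two_ne_zero).const_mul 4 using 1
  · ext x
    rw [sin_two_mul]
    field_simp
    ring
  · norm_num

theorem tendsto_mul_cos_sub_sin_div_cube :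
    Tendsto (fun x ↦ (x * cos x - sin x) / x ^ 3) (𝓝[≠] 0) (𝓝 (-1 / 3)) := by
  refine Tendsto.congr' (eventually_nhdsWithin_of_forall fun x (hx : x ≠ 0) ↦ ?_)
    (by convert tendsto_self_sub_sin_div_cube.sub tendsto_one_sub_cos_div_sq using 2; norm_num)
  field_simp
  ring

theorem tendsto_mul_sq_add_sin_sq_div_cube :
    Tendsto (fun x ↦ x * (x ^ 2 + sin x ^ 2) / x ^ 3) (𝓝[≠] 0) (𝓝 2) := by
  refine Tendsto.congr' (eventually_nhdsWithin_of_forall fun x (hx : x ≠ 0) ↦ ?_)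
    (by convert (tendsto_sin_div_self_nhdsNE.pow 2).const_add 1 using 2; norm_num)
  field_simp

theorem tendsto_sq_mul_sin_div_cube :
    Tendsto (fun x ↦ x ^ 2 * sin x / x ^ 3) (𝓝[≠] 0) (𝓝 1) :=
  tendsto_sin_div_self_nhdsNE.congr' (eventually_nhdsWithin_of_forall fun x (hx : x ≠ 0) ↦ by
    field_simp)

theorem tendsto_sq_sub_sin_sq_div_pow_four :
    Tendsto (fun x ↦ (x ^ 2 - sin x ^ 2) / x ^ 4) (𝓝[≠] 0) (𝓝 (1 / 3)) := by
  refine Tendsto.congr' (eventually_nhdsWithin_of_forall fun x (hx : x ≠ 0) ↦ ?_) (by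
    convert tendsto_self_sub_sin_div_cube.mul (tendsto_sin_div_self_nhdsNE.const_add 1) using 2
    norm_num)
  field_simp
  ring

theorem tendsto_mul_div_sq_sub_sin_sq {N : ℝ → ℝ} {c : ℝ}
    (hN : Tendsto (fun x ↦ N x / x ^ 3) (𝓝[≠] 0) (𝓝 c)) :
    Tendsto (fun x ↦ x * N x / (x ^ 2 - sin x ^ 2)) (𝓝[≠] 0) (𝓝 (3 * c)) := by
  refine Tendsto.congr' (eventually_nhdsWithin_of_forall fun x (hx : x ≠ 0) ↦ ?_)
    (by convert hN.div tendsto_sq_sub_sin_sq_div_pow_four (by norm_num) using 2; field_simp)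
  simp only [Pi.div_apply]
  field_simp

theorem tendsto_mul_comp_mul_div_sq_sub_sin_sq {N : ℝ → ℝ} {c τ : ℝ} (hτ : τ ≠ 0)
    (hN : Tendsto (fun x ↦ N x / x ^ 3) (𝓝[≠] 0) (𝓝 c)) :
    Tendsto (fun θ ↦ θ * N (τ * θ) / (τ ^ 2 * θ ^ 2 - sin (τ * θ) ^ 2)) (𝓝[≠] 0)
      (𝓝 (3 * c / τ)) := by
  convert ((tendsto_mul_div_sq_sub_sin_sq hN).comp_mul_left_nhdsNE hτ).div_const τ using 1
  ext θ
  field_simp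

/-- As θ₀ → 0 with θ₀ ≠ 0, the four coefficient functions converge to the
corresponding coefficients of the real-root-of-multiplicity-4 case. -/
theorem coefficient_functions_limit
    (τ σ₀ : ℝ) (hτ : 0 < τ)
    (D a₁ a₀ α₁ α₀ : ℝ → ℝ)
    (hD : ∀ θ₀ : ℝ, D θ₀ = τ ^ 2 * θ₀ ^ 2 - Real.sin (τ * θ₀) ^ 2)
    (ha₁ : ∀ θ₀ : ℝ, a₁ θ₀ = -2 * σ₀
      - 2 * θ₀ * (τ * θ₀ - Real.sin (τ * θ₀) * Real.cos (τ * θ₀)) / D θ₀)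
    (ha₀ : ∀ θ₀ : ℝ, a₀ θ₀ = σ₀ ^ 2
      + 2 * σ₀ * θ₀ * (τ * θ₀ - Real.sin (τ * θ₀) * Real.cos (τ * θ₀)) / D θ₀
      + θ₀ ^ 2 * (τ ^ 2 * θ₀ ^ 2 + Real.sin (τ * θ₀) ^ 2) / D θ₀)
    (hα₁ : ∀ θ₀ : ℝ, α₁ θ₀ = 2 * θ₀ * Real.exp (σ₀ * τ) *
      (τ * θ₀ * Real.cos (τ * θ₀) - Real.sin (τ * θ₀)) / D θ₀)
    (hα₀ : ∀ θ₀ : ℝ, α₀ θ₀ = 2 * θ₀ * Real.exp (σ₀ * τ) *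
      (σ₀ * (Real.sin (τ * θ₀) - τ * θ₀ * Real.cos (τ * θ₀))
        - τ * θ₀ ^ 2 * Real.sin (τ * θ₀)) / D θ₀) :
    Tendsto a₁ (𝓝[≠] 0) (𝓝 (-4 / τ - 2 * σ₀)) ∧
    Tendsto a₀ (𝓝[≠] 0) (𝓝 (6 / τ ^ 2 + 4 * σ₀ / τ + σ₀ ^ 2)) ∧
    Tendsto α₁ (𝓝[≠] 0) (𝓝 (-(2 / τ) * Real.exp (σ₀ * τ))) ∧
    Tendsto α₀ (𝓝[≠] 0) (𝓝 ((2 / τ) * Real.exp (σ₀ * τ) * (σ₀ - 3 / τ))) := by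
  have hτ₀ : τ ≠ 0 := hτ.ne'
  have h₁ := tendsto_mul_comp_mul_div_sq_sub_sin_sq hτ₀ tendsto_self_sub_sin_mul_cos_div_cube
  have h₂ := tendsto_mul_comp_mul_div_sq_sub_sin_sq hτ₀ tendsto_mul_cos_sub_sin_div_cube
  have h₃ := tendsto_mul_comp_mul_div_sq_sub_sin_sq hτ₀ tendsto_mul_sq_add_sin_sq_div_cube
  have h₄ := tendsto_mul_comp_mul_div_sq_sub_sin_sq hτ₀ tendsto_sq_mul_sin_div_cube
  simp only [← hD] at h₁ h₂ h₃ h₄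
  refine ⟨?_, ?_, ?_, ?_⟩
  · convert (h₁.const_mul 2).const_sub (-2 * σ₀) using 1
    · ext θ; rw [ha₁]; ring
    · congr 1; field_simp; ring
  · convert ((h₁.const_mul (2 * σ₀)).const_add (σ₀ ^ 2)).add (h₃.div_const τ) using 1
    · ext θ; rw [ha₀]; field_simp
    · congr 1; field_simp; ring
  · convert h₂.const_mul (2 * exp (σ₀ * τ)) using 1
    · ext θ; rw [hα₁]; ring
    · congr 1; field_simp
  · convert ((h₂.const_mul (-σ₀)).sub (h₄.div_const τ)).const_mul (2 * exp (σ₀ * τ))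
      using 1
    · ext θ; rw [hα₀]; field_simp; ring
    · congr 1; field_simp
end

section
/- Let τ > 0, let s₀ = σ₀ + iθ₀ with σ₀, θ₀ ∈ ℝ and θ₀ ≠ 0, and suppose the coefficients of Δ satisfy, with D = τ²θ₀² − sin²(τθ₀): a₁ = −2σ₀ − 2θ₀(τθ₀ − sin(τθ₀)cos(τθ₀))/D, a₀ = σ₀² + 2σ₀θ₀(τθ₀ − sin(τθ₀)cos(τθ₀))/D + θ₀²(τ²θ₀² + sin²(τθ₀))/D, α₁ = 2θ₀e^{σ₀τ}(τθ₀cos(τθ₀) − sin(τθ₀))/D, and α₀ = 2θ₀e^{σ₀τ}(σ₀(sin(τθ₀) − τθ₀cos(τθ₀)) − τθ₀²sin(τθ₀))/D. Then for every s ∈ ℂ one has τ²·Δ(s) = Δ̂_C(τ(s − σ₀); τθ₀), where for φ ≠ 0 the normalized quasipolynomial is Δ̂_C(z; φ) = z² − 2φ(φ − sin φ cos φ)/(φ² − sin²φ)·z + φ²(φ² + sin²φ)/(φ² − sin²φ) + e^{−z}( 2φ(φ cos φ − sin φ)/(φ² − sin²φ)·z − 2φ³ sin φ/(φ² − sin²φ)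 ). -/
open Complex

/-- Under the complex double-root coefficient choice, the change of variables
z = τ(s − σ₀) normalizes Δ to the quasipolynomial Δ̂_C(z; φ) with φ = τθ₀. -/
theorem normalization_complex_case
    (τ σ₀ θ₀ a₁ a₀ α₁ α₀ D : ℝ) (hτ : 0 < τ) (hθ₀ : θ₀ ≠ 0)
    (hD : D = τ ^ 2 * θ₀ ^ 2 - Real.sin (τ * θ₀) ^ 2)
    (ha₁ : a₁ = -2 * σ₀ - 2 * θ₀ * (τ * θ₀ - Real.sin (τ * θ₀) * Real.cos (τ * θ₀)) / D)
    (ha₀ : a₀ = σ₀ ^ 2 + 2 * σ₀ * θ₀ * (τ * θ₀ - Real.sin (τ * θ₀) * Real.cos (τ * θ₀)) / D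
            + θ₀ ^ 2 * (τ ^ 2 * θ₀ ^ 2 + Real.sin (τ * θ₀) ^ 2) / D)
    (hα₁ : α₁ = 2 * θ₀ * Real.exp (σ₀ * τ) *
            (τ * θ₀ * Real.cos (τ * θ₀) - Real.sin (τ * θ₀)) / D)
    (hα₀ : α₀ = 2 * θ₀ * Real.exp (σ₀ * τ) *
            (σ₀ * (Real.sin (τ * θ₀) - τ * θ₀ * Real.cos (τ * θ₀))
              - τ * θ₀ ^ 2 * Real.sin (τ * θ₀)) / D)
    (Δ : ℂ → ℂ)
    (hΔ : ∀ s : ℂ, Δ s = s ^ 2 + a₁ * s + a₀ + Complex.exp (-s * τ) * (α₁ * s + α₀))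
    (ΔC : ℂ → ℝ → ℂ)
    (hΔC : ∀ (z : ℂ) (φ : ℝ), φ ≠ 0 → ΔC z φ =
      z ^ 2
      - (2 * φ * (φ - Real.sin φ * Real.cos φ) / (φ ^ 2 - Real.sin φ ^ 2) : ℝ) * z
      + (φ ^ 2 * (φ ^ 2 + Real.sin φ ^ 2) / (φ ^ 2 - Real.sin φ ^ 2) : ℝ)
      + Complex.exp (-z) *
        ((2 * φ * (φ * Real.cos φ - Real.sin φ) / (φ ^ 2 - Real.sin φ ^ 2) : ℝ) * z
          - (2 * φ ^ 3 * Real.sin φ / (φ ^ 2 - Real.sin φ ^ 2) : ℝ))) :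
    ∀ s : ℂ, (τ : ℂ) ^ 2 * Δ s = ΔC (τ * (s - σ₀)) (τ * θ₀) := by
  intro s
  have hφ : τ * θ₀ ≠ 0 := mul_ne_zero hτ.ne' hθ₀
  have hD0 : D ≠ 0 := by
    have h := Real.sin_sq_lt_sq hφ
    rw [hD]
    nlinarith [h]
  rw [hΔ s, hΔC _ _ hφ]
  have hexp : Complex.exp (-((τ : ℂ) * (s - σ₀)))
      = Complex.exp (-s * τ) * (Real.exp (σ₀ * τ) : ℂ) := by
    rw [Complex.ofReal_exp, ← Complex.exp_add]
    congr 1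
    push_cast
    ring
  rw [hexp]
  subst hD ha₁ ha₀ hα₁ hα₀
  push_cast
  field_simp
  ring
end

section
/- Let τ > 0, let s₀ = σ₀ + iθ₀ with σ₀, θ₀ ∈ ℝ and θ₀ ≠ 0, and suppose the coefficients of Δ satisfy, with D = τ²θ₀² − sin²(τθ₀): a₁ = −2σ₀ − 2θ₀(τθ₀ − sin(τθ₀)cos(τθ₀))/D, a₀ = σ₀² + 2σ₀θ₀(τθ₀ − sin(τθ₀)cos(τθ₀))/D + θ₀²(τ²θ₀² + sin²(τθ₀))/D, α₁ = 2θ₀e^{σ₀τ}(τθ₀cos(τθ₀) − sin(τθ₀))/D, and α₀ = 2θ₀e^{σ₀τ}(σ₀(sin(τθ₀) − τθ₀cos(τθ₀)) − τθ₀²sin(τθ₀))/D. Then the second derivative of Δ at s₀ is nonzero: Δ''(s₀) ≠ 0. -/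
/-!
The second derivative `Δ''(s) = 2 + e^{-sτ} (τ² (α₁ s + α₀) - 2 τ α₁)` does not involve `a₁, a₀`.
Substituting `α₁, α₀` and writing `x = τθ₀`, one finds
`D Δ''(s₀) / 2 = -(x cos x - sin x)² + i x (x² + x sin x cos x - 2 sin² x)`.
If the real part vanishes then `sin x = x cos x`, and the imaginary part collapses to
`x (x² - sin² x) = x D`, which is nonzero because `sin² x < x²` for `x ≠ 0`.
-/

open Complex

noncomputable def quasipolynomial (a₁ a₀ α₁ α₀ τ : ℂ) (s : ℂ) : ℂ :=
  s ^ 2 + a₁ * s + a₀ + cexp (-s * τ) * (α₁ * s + α₀)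

lemma hasDerivAt_cexp_neg_mul (τ s : ℂ) :
    HasDerivAt (fun s => cexp (-s * τ)) (-τ * cexp (-s * τ)) s := by
  simpa [mul_comm] using ((hasDerivAt_id s).neg.mul_const τ).cexp

section Derivatives

variable (a₁ a₀ α₁ α₀ τ : ℂ)

lemma deriv_quasipolynomial :
    deriv (quasipolynomial a₁ a₀ α₁ α₀ τ) =
      fun s => 2 * s + a₁ + cexp (-s * τ) * (α₁ - τ * (α₁ * s + α₀)) := by
  ext s
  have h := (((hasDerivAt_pow 2 s).add ((hasDerivAt_id s).const_mul a₁)).add_const a₀).add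
    ((hasDerivAt_cexp_neg_mul τ s).mul (((hasDerivAt_id s).const_mul α₁).add_const α₀))
  exact (h.congr_deriv (by
    simp only [Nat.cast_ofNat, Nat.add_one_sub_one, pow_one, mul_one, neg_mul, id_eq]; ring)).deriv

lemma iteratedDeriv_two_quasipolynomial (s : ℂ) :
    iteratedDeriv 2 (quasipolynomial a₁ a₀ α₁ α₀ τ) s =
      2 + cexp (-s * τ) * (τ ^ 2 * (α₁ * s + α₀) - 2 * τ * α₁) := by
  rw [iteratedDeriv_succ, iteratedDeriv_one, deriv_quasipolynomial]
  have h := (((hasDerivAt_id s).const_mul 2).add_const a₁).add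
    ((hasDerivAt_cexp_neg_mul τ s).mul
      (((((hasDerivAt_id s).const_mul α₁).add_const α₀).const_mul τ).const_sub α₁))
  exact (h.congr_deriv (by simp only [mul_one, neg_mul, id_eq, mul_neg]; ring)).deriv

end Derivatives

lemma cexp_neg_mul_ofReal (σ θ τ : ℝ) :
    cexp (-(σ + θ * I) * τ) = (Real.cos (τ * θ) - Real.sin (τ * θ) * I) / Real.exp (σ * τ) := by
  rw [show -(σ + θ * I) * τ = ((-(σ * τ) : ℝ) : ℂ) + ((-(τ * θ) : ℝ) : ℂ) * I by
      push_cast; ring, exp_add, exp_mul_I, ← ofReal_exp, ← ofReal_cos, ← ofReal_sin,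
    Real.exp_neg, Real.cos_neg, Real.sin_neg]
  push_cast
  ring

noncomputable def doubleRootNumerator (x : ℝ) : ℂ :=
  ⟨-(x * Real.cos x - Real.sin x) ^ 2,
    x * (x ^ 2 + x * Real.sin x * Real.cos x - 2 * Real.sin x ^ 2)⟩

lemma doubleRootNumerator_ne_zero {x : ℝ} (hx : x ≠ 0) : doubleRootNumerator x ≠ 0 := by
  intro h
  obtain ⟨hre, him⟩ := Complex.ext_iff.1 h
  simp only [doubleRootNumerator, zero_re, zero_im] at hre him
  have hsin : Real.sin x = x * Real.cos x := by nlinarith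
  have hxD : x * (x ^ 2 - Real.sin x ^ 2) = 0 := by
    linear_combination him + x * Real.sin x * hsin
  rcases mul_eq_zero.1 hxD with h | h
  · exact hx h
  · linarith [Real.sin_sq_lt_sq hx]

lemma iteratedDeriv_two_quasipolynomial_of_double_root (a₁ a₀ : ℂ)
    (τ σ₀ θ₀ α₁ α₀ D : ℝ) (hD0 : D ≠ 0)
    (hD : D = τ ^ 2 * θ₀ ^ 2 - Real.sin (τ * θ₀) ^ 2)
    (hα₁ : α₁ = 2 * θ₀ * Real.exp (σ₀ * τ) *
            (τ * θ₀ * Real.cos (τ * θ₀) - Real.sin (τ * θ₀)) / D)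
    (hα₀ : α₀ = 2 * θ₀ * Real.exp (σ₀ * τ) *
            (σ₀ * (Real.sin (τ * θ₀) - τ * θ₀ * Real.cos (τ * θ₀))
              - τ * θ₀ ^ 2 * Real.sin (τ * θ₀)) / D) :
    iteratedDeriv 2 (quasipolynomial a₁ a₀ α₁ α₀ τ) (σ₀ + θ₀ * I) =
      2 / D * doubleRootNumerator (τ * θ₀) := by
  have hsc := Real.sin_sq_add_cos_sq (τ * θ₀)
  have he := Real.exp_pos (σ₀ * τ)
  rw [iteratedDeriv_two_quasipolynomial, cexp_neg_mul_ofReal, hα₁, hα₀, doubleRootNumerator,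
    mk_eq_add_mul_I]
  subst hD
  generalize Real.exp (σ₀ * τ) = e at *
  generalize Real.sin (τ * θ₀) = s at *
  generalize Real.cos (τ * θ₀) = c at *
  have hD' : ((τ : ℂ) ^ 2 * θ₀ ^ 2 - s ^ 2) ≠ 0 := by exact_mod_cast hD0
  have he' : (e : ℂ) ≠ 0 := by exact_mod_cast he.ne'
  have hsc' : (s : ℂ) ^ 2 + c ^ 2 = 1 := by exact_mod_cast hsc
  push_cast
  field_simp
  linear_combination (τ ^ 2 * θ₀ ^ 2 * s ^ 2 - τ ^ 3 * θ₀ ^ 3 * s * c : ℂ) * I_sq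
    + (τ ^ 3 * θ₀ ^ 3 * I - τ ^ 2 * θ₀ ^ 2 : ℂ) * hsc'

theorem second_derivative_nonzero_general
    (τ σ₀ θ₀ a₁ a₀ α₁ α₀ D : ℝ) (hτ : 0 < τ) (hθ₀ : θ₀ ≠ 0)
    (s₀ : ℂ) (hs₀ : s₀ = σ₀ + θ₀ * Complex.I)
    (hD : D = τ ^ 2 * θ₀ ^ 2 - Real.sin (τ * θ₀) ^ 2)
    (hα₁ : α₁ = 2 * θ₀ * Real.exp (σ₀ * τ) *
            (τ * θ₀ * Real.cos (τ * θ₀) - Real.sin (τ * θ₀)) / D)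
    (hα₀ : α₀ = 2 * θ₀ * Real.exp (σ₀ * τ) *
            (σ₀ * (Real.sin (τ * θ₀) - τ * θ₀ * Real.cos (τ * θ₀))
              - τ * θ₀ ^ 2 * Real.sin (τ * θ₀)) / D)
    (Δ : ℂ → ℂ)
    (hΔ : ∀ s : ℂ, Δ s = s ^ 2 + a₁ * s + a₀ + Complex.exp (-s * τ) * (α₁ * s + α₀)) :
    iteratedDeriv 2 Δ s₀ ≠ 0 := by
  have hx : τ * θ₀ ≠ 0 := mul_ne_zero hτ.ne' hθ₀
  have hD0 : D ≠ 0 := by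
    rw [hD, ← mul_pow]
    exact (sub_pos.2 (Real.sin_sq_lt_sq hx)).ne'
  obtain rfl : Δ = quasipolynomial a₁ a₀ α₁ α₀ τ := funext hΔ
  rw [hs₀, iteratedDeriv_two_quasipolynomial_of_double_root _ _ τ σ₀ θ₀ α₁ α₀ D hD0 hD hα₁ hα₀]
  exact mul_ne_zero (div_ne_zero two_ne_zero (ofReal_ne_zero.2 hD0))
    (doubleRootNumerator_ne_zero hx)

/-- Under the complex double-root coefficient choice, the second derivative
of Δ at s₀ = σ₀ + iθ₀ is nonzero. -/
theorem second_derivative_nonzero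
    (τ σ₀ θ₀ a₁ a₀ α₁ α₀ D : ℝ) (hτ : 0 < τ) (hθ₀ : θ₀ ≠ 0)
    (s₀ : ℂ) (hs₀ : s₀ = σ₀ + θ₀ * Complex.I)
    (hD : D = τ ^ 2 * θ₀ ^ 2 - Real.sin (τ * θ₀) ^ 2)
    (ha₁ : a₁ = -2 * σ₀ - 2 * θ₀ * (τ * θ₀ - Real.sin (τ * θ₀) * Real.cos (τ * θ₀)) / D)
    (ha₀ : a₀ = σ₀ ^ 2 + 2 * σ₀ * θ₀ * (τ * θ₀ - Real.sin (τ * θ₀) * Real.cos (τ * θ₀)) / D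
            + θ₀ ^ 2 * (τ ^ 2 * θ₀ ^ 2 + Real.sin (τ * θ₀) ^ 2) / D)
    (hα₁ : α₁ = 2 * θ₀ * Real.exp (σ₀ * τ) *
            (τ * θ₀ * Real.cos (τ * θ₀) - Real.sin (τ * θ₀)) / D)
    (hα₀ : α₀ = 2 * θ₀ * Real.exp (σ₀ * τ) *
            (σ₀ * (Real.sin (τ * θ₀) - τ * θ₀ * Real.cos (τ * θ₀))
              - τ * θ₀ ^ 2 * Real.sin (τ * θ₀)) / D)
    (Δ : ℂ → ℂ)
    (hΔ : ∀ s : ℂ, Δ s = s ^ 2 + a₁ * s + a₀ + Complex.exp (-s * τ) * (α₁ * s + α₀)) :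
    iteratedDeriv 2 Δ s₀ ≠ 0 :=
  second_derivative_nonzero_general τ σ₀ θ₀ a₁ a₀ α₁ α₀ D hτ hθ₀ s₀ hs₀ hD hα₁ hα₀ Δ hΔ
end

section
/- Let τ > 0, let s₀ = σ₀ + iθ₀ with σ₀, θ₀ ∈ ℝ and θ₀ ≠ 0, and let a₁, a₀, α₁, α₀ ∈ ℝ. Then Δ(s₀) = 0 and Δ'(s₀) = 0 hold simultaneously if and only if, setting D = τ²θ₀² − sin²(τθ₀), one has a₁ = −2σ₀ − 2θ₀(τθ₀ − sin(τθ₀)cos(τθ₀))/D, a₀ = σ₀² + 2σ₀θ₀(τθ₀ − sin(τθ₀)cos(τθ₀))/D + θ₀²(τ²θ₀² + sin²(τθ₀))/D, α₁ = 2θ₀e^{σ₀τ}(τθ₀cos(τθ₀) − sin(τθ₀))/D, and α₀ = 2θ₀e^{σ₀τ}(σ₀(sin(τθ₀) − τθ₀cos(τθ₀)) − τθ₀²sin(τθ₀))/D. -/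
/-!
Translating `s` by `σ₀` and absorbing `e^{-σ₀τ}` into `α₁, α₀` moves the double root to `iθ₀`.
There the real and imaginary parts of `Δ(iθ₀) = 0` and `Δ'(iθ₀) = 0` form a linear system in the
four shifted coefficients whose determinant is, up to sign, `D = (τθ₀)² - sin²(τθ₀)`; it is
positive because `|sin x| < |x|` for `x ≠ 0`, and solving the system gives the formulas.
-/

open Complex

noncomputable def quasipoly (a₁ a₀ α₁ α₀ τ s : ℂ) : ℂ :=
  s ^ 2 + a₁ * s + a₀ + exp (-s * τ) * (α₁ * s + α₀)

theorem hasDerivAt_quasipoly (a₁ a₀ α₁ α₀ τ s : ℂ) :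
    HasDerivAt (quasipoly a₁ a₀ α₁ α₀ τ)
      (2 * s + a₁ + exp (-s * τ) * (α₁ - τ * (α₁ * s + α₀))) s := by
  have hexp : HasDerivAt (fun s ↦ exp (-s * τ)) (exp (-s * τ) * -τ) s := by
    simpa using ((hasDerivAt_id s).neg.mul_const τ).cexp
  have hlin : HasDerivAt (fun s ↦ α₁ * s + α₀) α₁ s := by
    simpa using ((hasDerivAt_id s).const_mul α₁).add_const α₀
  refine ((((hasDerivAt_pow 2 s).add ((hasDerivAt_id s).const_mul a₁)).add_const a₀).add
    (hexp.mul hlin)).congr_deriv ?_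
  norm_num
  ring

theorem quasipoly_add_const (a₁ a₀ α₁ α₀ τ σ z : ℂ) :
    quasipoly a₁ a₀ α₁ α₀ τ (z + σ) =
      quasipoly (a₁ + 2 * σ) (σ ^ 2 + a₁ * σ + a₀) (exp (-σ * τ) * α₁)
        (exp (-σ * τ) * (α₁ * σ + α₀)) τ z := by
  have hexp : exp (-(z + σ) * τ) = exp (-σ * τ) * exp (-z * τ) := by
    rw [← exp_add]
    ring_nf
  simp only [quasipoly, hexp]
  ring

theorem exp_neg_ofReal_mul_I_mul (θ τ : ℝ) :
    exp (-(θ * I) * τ) = Real.cos (τ * θ) - Real.sin (τ * θ) * I := by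
  rw [show -(θ * I) * τ = -(τ * θ : ℂ) * I by ring, exp_mul_I, cos_neg, sin_neg]
  push_cast
  ring

theorem quasipoly_ofReal_mul_I (b₁ b₀ β₁ β₀ τ θ : ℝ) :
    quasipoly b₁ b₀ β₁ β₀ τ (θ * I) =
      ((b₀ - θ ^ 2 + Real.cos (τ * θ) * β₀ + Real.sin (τ * θ) * θ * β₁ : ℝ) : ℂ) +
      ((θ * b₁ + Real.cos (τ * θ) * θ * β₁ - Real.sin (τ * θ) * β₀ : ℝ) : ℂ) * I := by
  rw [quasipoly, exp_neg_ofReal_mul_I_mul]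
  push_cast
  ring_nf
  rw [I_sq]
  ring

theorem deriv_quasipoly_ofReal_mul_I (b₁ b₀ β₁ β₀ τ θ : ℝ) :
    deriv (quasipoly b₁ b₀ β₁ β₀ τ) (θ * I) =
      ((b₁ + Real.cos (τ * θ) * β₁ - τ * (Real.cos (τ * θ) * β₀ + Real.sin (τ * θ) * θ * β₁) :
          ℝ) : ℂ) +
      ((2 * θ - Real.cos (τ * θ) * τ * θ * β₁ - Real.sin (τ * θ) * (β₁ - τ * β₀) : ℝ) : ℂ) * I := by
  rw [(hasDerivAt_quasipoly _ _ _ _ _ _).deriv, exp_neg_ofReal_mul_I_mul]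
  push_cast
  ring_nf
  rw [I_sq]
  ring

theorem ofReal_add_ofReal_mul_I_eq_zero (x y : ℝ) : (x : ℂ) + y * I = 0 ↔ x = 0 ∧ y = 0 := by
  simp [Complex.ext_iff]

theorem double_root_system_iff {c s τ θ D b₁ b₀ β₁ β₀ : ℝ} (hcs : c ^ 2 + s ^ 2 = 1)
    (hD : D = τ ^ 2 * θ ^ 2 - s ^ 2) (hD0 : D ≠ 0) :
    ((b₀ - θ ^ 2 + c * β₀ + s * θ * β₁ = 0 ∧ θ * b₁ + c * θ * β₁ - s * β₀ = 0) ∧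
      (b₁ + c * β₁ - τ * (c * β₀ + s * θ * β₁) = 0 ∧
        2 * θ - c * τ * θ * β₁ - s * (β₁ - τ * β₀) = 0)) ↔
    (b₁ = -2 * θ * (τ * θ - s * c) / D ∧ b₀ = θ ^ 2 * (τ ^ 2 * θ ^ 2 + s ^ 2) / D ∧
      β₁ = 2 * θ * (τ * θ * c - s) / D ∧ β₀ = -2 * τ * θ ^ 3 * s / D) := by
  constructor
  · rintro ⟨⟨e1, e2⟩, e3, e4⟩
    -- `θ * e3 - e2` and `e4` form a 2 × 2 system in `β₁, β₀` with determinant `-D`.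
    have hβ₁ : β₁ * D = 2 * θ * (τ * θ * c - s) := by
      linear_combination -(s * τ) * (θ * e3 - e2) - (τ * θ * c - s) * e4
        - β₁ * τ ^ 2 * θ ^ 2 * hcs + β₁ * hD
    have hβ₀ : β₀ * D = -2 * τ * θ ^ 3 * s := by
      linear_combination -(τ * θ * c + s) * (θ * e3 - e2) + s * τ * θ ^ 2 * e4
        - β₀ * τ ^ 2 * θ ^ 2 * hcs + β₀ * hD
    have hb₁ : b₁ * D = -2 * θ * (τ * θ - s * c) := by
      linear_combination D * e3 + (τ * s * θ - c) * hβ₁ + τ * c * hβ₀ - 2 * τ * θ ^ 2 * hcs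
    have hb₀ : b₀ * D = θ ^ 2 * (τ ^ 2 * θ ^ 2 + s ^ 2) := by
      linear_combination D * e1 - c * hβ₀ - s * θ * hβ₁ + θ ^ 2 * hD
    exact ⟨(eq_div_iff hD0).2 hb₁, (eq_div_iff hD0).2 hb₀, (eq_div_iff hD0).2 hβ₁,
      (eq_div_iff hD0).2 hβ₀⟩
  · rintro ⟨h₁, h₀, k₁, k₀⟩
    rw [eq_div_iff hD0] at h₁ h₀ k₁ k₀
    refine ⟨⟨?_, ?_⟩, ?_, ?_⟩ <;> refine (mul_left_inj' hD0).1 ?_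
    · linear_combination h₀ + c * k₀ + s * θ * k₁ - θ ^ 2 * hD
    · linear_combination θ * h₁ + c * θ * k₁ - s * k₀ + 2 * τ * θ ^ 3 * hcs
    · linear_combination h₁ + c * k₁ - τ * (c * k₀ + s * θ * k₁) + 2 * τ * θ ^ 2 * hcs
    · linear_combination 2 * θ * hD - (c * τ * θ + s) * k₁ + s * τ * k₀ - 2 * τ ^ 2 * θ ^ 3 * hcs

theorem quasipoly_double_root_ofReal_mul_I_iff {b₁ b₀ β₁ β₀ τ θ D : ℝ}
    (hD : D = τ ^ 2 * θ ^ 2 - Real.sin (τ * θ) ^ 2) (hD0 : D ≠ 0) :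
    (quasipoly b₁ b₀ β₁ β₀ τ (θ * I) = 0 ∧ deriv (quasipoly b₁ b₀ β₁ β₀ τ) (θ * I) = 0) ↔
    (b₁ = -2 * θ * (τ * θ - Real.sin (τ * θ) * Real.cos (τ * θ)) / D ∧
      b₀ = θ ^ 2 * (τ ^ 2 * θ ^ 2 + Real.sin (τ * θ) ^ 2) / D ∧
      β₁ = 2 * θ * (τ * θ * Real.cos (τ * θ) - Real.sin (τ * θ)) / D ∧
      β₀ = -2 * τ * θ ^ 3 * Real.sin (τ * θ) / D) := by
  rw [quasipoly_ofReal_mul_I, deriv_quasipoly_ofReal_mul_I, ofReal_add_ofReal_mul_I_eq_zero,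
    ofReal_add_ofReal_mul_I_eq_zero]
  exact double_root_system_iff (Real.cos_sq_add_sin_sq _) hD hD0

/-- For s₀ = σ₀ + iθ₀ with θ₀ ≠ 0, Δ(s₀) = 0 and Δ'(s₀) = 0 hold
simultaneously if and only if the coefficients are given by the stated formulas. -/
theorem double_root_conditions_iff
    (τ σ₀ θ₀ a₁ a₀ α₁ α₀ D : ℝ) (hτ : 0 < τ) (hθ₀ : θ₀ ≠ 0)
    (s₀ : ℂ) (hs₀ : s₀ = σ₀ + θ₀ * Complex.I)
    (hD : D = τ ^ 2 * θ₀ ^ 2 - Real.sin (τ * θ₀) ^ 2)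
    (Δ : ℂ → ℂ)
    (hΔ : ∀ s : ℂ, Δ s = s ^ 2 + a₁ * s + a₀ + Complex.exp (-s * τ) * (α₁ * s + α₀)) :
    (Δ s₀ = 0 ∧ deriv Δ s₀ = 0)
    ↔ (a₁ = -2 * σ₀ - 2 * θ₀ * (τ * θ₀ - Real.sin (τ * θ₀) * Real.cos (τ * θ₀)) / D ∧
       a₀ = σ₀ ^ 2 + 2 * σ₀ * θ₀ * (τ * θ₀ - Real.sin (τ * θ₀) * Real.cos (τ * θ₀)) / D
            + θ₀ ^ 2 * (τ ^ 2 * θ₀ ^ 2 + Real.sin (τ * θ₀) ^ 2) / D ∧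
       α₁ = 2 * θ₀ * Real.exp (σ₀ * τ) * (τ * θ₀ * Real.cos (τ * θ₀) - Real.sin (τ * θ₀)) / D ∧
       α₀ = 2 * θ₀ * Real.exp (σ₀ * τ) *
              (σ₀ * (Real.sin (τ * θ₀) - τ * θ₀ * Real.cos (τ * θ₀))
                - τ * θ₀ ^ 2 * Real.sin (τ * θ₀)) / D) := by
  have hD0 : D ≠ 0 := by
    rw [hD, ← mul_pow]
    exact (sub_pos.2 (Real.sin_sq_lt_sq (mul_ne_zero hτ.ne' hθ₀))).ne'
  have hshift : (fun z ↦ Δ (z + σ₀)) = quasipoly ↑(a₁ + 2 * σ₀) ↑(σ₀ ^ 2 + a₁ * σ₀ + a₀)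
      ↑(Real.exp (-(σ₀ * τ)) * α₁) ↑(Real.exp (-(σ₀ * τ)) * (α₁ * σ₀ + α₀)) τ := by
    funext z
    rw [hΔ, ← quasipoly, quasipoly_add_const]
    push_cast
    ring_nf
  rw [hs₀, add_comm, ← deriv_comp_add_const, show Δ (θ₀ * I + σ₀) = (fun z ↦ Δ (z + σ₀)) (θ₀ * I)
    from rfl, hshift, quasipoly_double_root_ofReal_mul_I_iff hD hD0]
  have hexp : Real.exp (-(σ₀ * τ)) * Real.exp (σ₀ * τ) = 1 := by
    rw [← Real.exp_add, neg_add_cancel, Real.exp_zero]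
  constructor
  · rintro ⟨h₁, h₀, k₁, k₀⟩
    refine ⟨by linear_combination h₁, by linear_combination h₀ - σ₀ * h₁, ?_, ?_⟩
    · linear_combination Real.exp (σ₀ * τ) * k₁ - α₁ * hexp
    · linear_combination Real.exp (σ₀ * τ) * (k₀ - σ₀ * k₁) - α₀ * hexp
  · rintro ⟨h₁, h₀, k₁, k₀⟩
    refine ⟨by linear_combination h₁, by linear_combination h₀ + σ₀ * h₁, ?_, ?_⟩
    · rw [k₁, Real.exp_neg]
      field_simp
    · rw [k₀, k₁, Real.exp_neg]
      field_simp
      ring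
end

section
/- Let ω > 0, let k be a positive integer, set τ_k = kπ/ω, and define Δ_ω : ℂ → ℂ by Δ_ω(s) = s² + (2/τ_k)((−1)^k e^{−sτ_k} − 1)s + ω². Then iω and −iω are roots of multiplicity exactly 2 of Δ_ω (Δ_ω and Δ_ω' vanish at ±iω while Δ_ω'' does not), and they form a pair of strictly dominant roots: every s ∈ ℂ with s ∉ {iω, −iω} and Δ_ω(s) = 0 satisfies Re s < 0. -/
/-!
Since `ωτ = kπ`, at `s = ±iω` we have `(-1)^k e^{-sτ} = 1`; this kills `Δ` and `Δ'` and leaves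
`Δ''(±iω) = 2(±iωτ - 1) ≠ 0`.

For dominance put `p = (s - iω)τ` and `q = (s + iω)τ`. Then `e^{-p} = e^{-q} = (-1)^k e^{-sτ}`
and `τ²Δ(s) = pq - (p + q)(1 - e^{-p})`, so at a root `1/(1 - e^{-p}) = 1/p + 1/q`. On the closed
right half-plane `Re 1/(1 - e^{-z}) ≥ 1/2 + Re 1/z`; applied to `p` and to `q` this forces
`Re 1/p ≥ 1/2` and `Re 1/q ≥ 1/2`, i.e. both lie in the closed unit disc around `1`, which is
incompatible with `|p - q| = 2kπ > 2`.
-/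

open Complex

namespace Real

lemma two_mul_mul_exp_neg_le {ν : ℝ} (hν : 0 ≤ ν) : 2 * ν * exp (-ν) ≤ 1 - exp (-ν) ^ 2 := by
  have hsinh : 2 * ν ≤ exp ν - exp (-ν) := by
    have := self_le_sinh_iff.mpr hν
    rw [sinh_eq] at this
    linarith
  have hprod : exp ν * exp (-ν) = 1 := by rw [← exp_add, add_neg_cancel, exp_zero]
  nlinarith [mul_le_mul_of_nonneg_right hsinh (exp_pos (-ν)).le]

-- `tanh (ν / 2) ≤ ν / 2`, via monotonicity of `x - 2 + (x + 2) e^{-x}`.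
lemma two_mul_one_sub_exp_neg_le {ν : ℝ} (hν : 0 ≤ ν) :
    2 * (1 - exp (-ν)) ≤ ν * (1 + exp (-ν)) := by
  have hmono : Monotone fun x => x - 2 + (x + 2) * exp (-x) := by
    refine monotone_of_hasDerivAt_nonneg (f' := fun x => 1 - (x + 1) * exp (-x)) (fun x => ?_)
      (fun x => ?_)
    · have := ((hasDerivAt_id x).sub_const 2).add
        (((hasDerivAt_id x).add_const 2).mul (hasDerivAt_id x).neg.exp)
      exact this.congr_deriv (by simp only [Pi.neg_apply, id]; ring)
    · have h := mul_le_mul_of_nonneg_right (add_one_le_exp x) (exp_pos (-x)).le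
      rw [← exp_add, add_neg_cancel, exp_zero] at h
      simp only [Pi.zero_apply]
      linarith
  have := hmono hν
  simp only [neg_zero, exp_zero] at this
  linarith

end Real

namespace Complex

theorem half_add_re_inv_le_re_inv_one_sub_exp_neg {z : ℂ} (hz : 0 ≤ z.re) (hz₀ : z ≠ 0)
    (hE : exp (-z) ≠ 1) : 1 / 2 + (z⁻¹).re ≤ ((1 - exp (-z))⁻¹).re := by
  set ν := z.re
  set θ := z.im
  set e := Real.exp (-ν)
  set c := (exp (-z)).re
  have hc : c = e * Real.cos θ := by simp [c, e, ν, θ, exp_re]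
  have hnormSq : normSq (1 - exp (-z)) = 1 - 2 * c + e ^ 2 := by
    have hnormE : normSq (exp (-z)) = e ^ 2 := by rw [normSq_eq_norm_sq, norm_exp, neg_re]
    rw [normSq_apply] at hnormE ⊢
    simp only [sub_re, one_re, sub_im, one_im]
    linear_combination hnormE
  have hM : 0 < 1 - 2 * c + e ^ 2 := hnormSq ▸ normSq_pos.mpr (sub_ne_zero.mpr hE.symm)
  have hD : 0 < ν ^ 2 + θ ^ 2 := by
    have := normSq_pos.mpr hz₀
    rwa [normSq_apply, ← sq, ← sq] at this
  -- `cos θ ≥ 1 - θ² / 2` reduces the claim to the two real exponential inequalities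
  have hmain : 2 * ν * (1 - 2 * c + e ^ 2) ≤ (1 - e ^ 2) * (ν ^ 2 + θ ^ 2) := by
    have hcos : e * (1 - θ ^ 2 / 2) ≤ c :=
      hc ▸ mul_le_mul_of_nonneg_left Real.one_sub_sq_div_two_le_cos (Real.exp_pos _).le
    have h₁ := Real.two_mul_mul_exp_neg_le hz
    have h₂ := Real.two_mul_one_sub_exp_neg_le hz
    have he : e ≤ 1 := Real.exp_le_one_iff.mpr (neg_nonpos.mpr hz)
    nlinarith [mul_le_mul_of_nonneg_left hcos (by linarith : (0:ℝ) ≤ 4 * ν),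
      mul_le_mul_of_nonneg_right h₁ (sq_nonneg θ),
      mul_le_mul_of_nonneg_left h₂ (mul_nonneg hz (sub_nonneg.mpr he))]
  rw [inv_re, inv_re, hnormSq, normSq_apply, ← sq, ← sq, sub_re, one_re]
  rw [div_add_div _ _ two_ne_zero hD.ne', div_le_div_iff₀ (by positivity) hM]
  nlinarith [hmain]

theorem norm_sub_one_le_one_of_half_le_re_inv {z : ℂ} (h : 1 / 2 ≤ (z⁻¹).re) : ‖z - 1‖ ≤ 1 := by
  rcases eq_or_ne z 0 with rfl | hz
  · norm_num at h
  have hpos := normSq_pos.mpr hz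
  rw [inv_re, le_div_iff₀ hpos] at h
  rw [← sq_le_one_iff₀ (norm_nonneg _), ← normSq_eq_norm_sq, normSq_apply]
  rw [normSq_apply] at h
  simp only [sub_re, one_re, sub_im, one_im]
  nlinarith

theorem norm_sub_le_two_of_mul_eq_add_mul_one_sub_exp {p q : ℂ} (hp : p ≠ 0) (hq : q ≠ 0)
    (hp_re : 0 ≤ p.re) (hq_re : 0 ≤ q.re) (hpq : exp (-p) = exp (-q))
    (h : p * q = (p + q) * (1 - exp (-p))) : ‖p - q‖ ≤ 2 := by
  have hE : exp (-p) ≠ 1 := by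
    rintro hE
    rw [hE, sub_self, mul_zero] at h
    exact mul_ne_zero hp hq h
  have hsum : (1 - exp (-p))⁻¹ = p⁻¹ + q⁻¹ := by
    have : p + q ≠ 0 := by
      rintro h0
      rw [h0, zero_mul] at h
      exact mul_ne_zero hp hq h
    rw [inv_add_inv hp hq, h, div_mul_cancel_left₀ this]
  have hp' := half_add_re_inv_le_re_inv_one_sub_exp_neg hp_re hp hE
  have hq' := half_add_re_inv_le_re_inv_one_sub_exp_neg hq_re hq (hpq ▸ hE)
  rw [← hpq] at hq'
  rw [hsum, add_re] at hp' hq'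
  calc ‖p - q‖ = ‖(p - 1) - (q - 1)‖ := by ring_nf
    _ ≤ ‖p - 1‖ + ‖q - 1‖ := norm_sub_le _ _
    _ ≤ 1 + 1 := add_le_add (norm_sub_one_le_one_of_half_le_re_inv (by linarith))
        (norm_sub_one_le_one_of_half_le_re_inv (by linarith))
    _ = 2 := one_add_one_eq_two

end Complex

noncomputable def delayedResonatorQuasipoly (a c τ b : ℂ) (s : ℂ) : ℂ :=
  s ^ 2 + a * (c * exp (-s * τ) - 1) * s + b

namespace delayedResonatorQuasipoly

variable (a c τ b : ℂ)

theorem hasDerivAt (s : ℂ) :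
    HasDerivAt (delayedResonatorQuasipoly a c τ b)
      (2 * s + a * (c * exp (-s * τ) - 1) - a * c * τ * exp (-s * τ) * s) s := by
  have hexp := ((hasDerivAt_id s).neg.mul_const τ).cexp
  have := (((hasDerivAt_pow 2 s).add
    (((hexp.const_mul c).sub_const 1).const_mul a |>.mul (hasDerivAt_id s))).add_const b)
  exact this.congr_deriv (by simp only [Pi.neg_apply, id]; ring)

theorem deriv_eq : deriv (delayedResonatorQuasipoly a c τ b) =
    fun s => 2 * s + a * (c * exp (-s * τ) - 1) - a * c * τ * exp (-s * τ) * s :=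
  funext fun s => (hasDerivAt a c τ b s).deriv

theorem iteratedDeriv_two (s : ℂ) : iteratedDeriv 2 (delayedResonatorQuasipoly a c τ b) s =
    2 - 2 * a * c * τ * exp (-s * τ) + a * c * τ ^ 2 * exp (-s * τ) * s := by
  rw [iteratedDeriv_succ, iteratedDeriv_one, deriv_eq]
  have hexp := ((hasDerivAt_id s).neg.mul_const τ).cexp
  have := ((hasDerivAt_id s).const_mul 2).add (((hexp.const_mul c).sub_const 1).const_mul a) |>.sub
    ((hexp.const_mul (a * c * τ)).mul (hasDerivAt_id s))
  exact (this.congr_deriv (by simp only [Pi.neg_apply, id]; ring)).deriv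

theorem double_root (hτ : τ ≠ 0) {s : ℂ} (hc : c * exp (-s * τ) = 1) (hb : s ^ 2 + b = 0)
    (hτs : τ * s ≠ 1) :
    delayedResonatorQuasipoly (2 / τ) c τ b s = 0 ∧
      deriv (delayedResonatorQuasipoly (2 / τ) c τ b) s = 0 ∧
      iteratedDeriv 2 (delayedResonatorQuasipoly (2 / τ) c τ b) s ≠ 0 := by
  refine ⟨?_, ?_, ?_⟩
  · rw [delayedResonatorQuasipoly, hc, sub_self, mul_zero, zero_mul, add_zero, hb]
  · rw [deriv_eq]
    linear_combination (2 / τ - 2 / τ * τ * s) * hc - 2 * s * mul_inv_cancel₀ hτ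
  · have h : iteratedDeriv 2 (delayedResonatorQuasipoly (2 / τ) c τ b) s = 2 * (τ * s - 1) := by
      rw [iteratedDeriv_two]
      linear_combination (2 / τ * τ ^ 2 * s - 4 / τ * τ) * hc + (2 * τ * s - 4) * mul_inv_cancel₀ hτ
    rw [h]
    exact mul_ne_zero two_ne_zero (sub_ne_zero.mpr hτs)

theorem sq_mul_apply (hτ : τ ≠ 0) (ω s : ℂ) :
    τ ^ 2 * delayedResonatorQuasipoly (2 / τ) c τ (ω ^ 2) s =
      ((s - I * ω) * τ) * ((s + I * ω) * τ) -
        ((s - I * ω) * τ + (s + I * ω) * τ) * (1 - c * exp (-s * τ)) := by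
  rw [delayedResonatorQuasipoly]
  linear_combination τ ^ 2 * ω ^ 2 * I_sq +
    2 * τ * (c * exp (-s * τ) - 1) * s * mul_inv_cancel₀ hτ

theorem re_neg_of_eq_zero {τ ω : ℝ} (hτ : 0 < τ) (hωτ : 1 < |ω * τ|)
    (hc₁ : exp (I * ω * τ) = c) (hc₂ : exp (-(I * ω * τ)) = c) {s : ℂ}
    (hs : delayedResonatorQuasipoly (2 / τ) c τ ((ω : ℂ) ^ 2) s = 0) (h₁ : s ≠ I * ω)
    (h₂ : s ≠ -(I * ω)) : s.re < 0 := by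
  by_contra! hre
  have hτ₀ : (τ : ℂ) ≠ 0 := ofReal_ne_zero.mpr hτ.ne'
  set p := (s - I * ω) * τ
  set q := (s + I * ω) * τ
  have hp : p ≠ 0 := mul_ne_zero (sub_ne_zero.mpr h₁) hτ₀
  have hq : q ≠ 0 := mul_ne_zero (by rwa [← sub_neg_eq_add, sub_ne_zero]) hτ₀
  have hp_re : p.re = s.re * τ := by simp [p]
  have hq_re : q.re = s.re * τ := by simp [q]
  have hexp_p : exp (-p) = c * exp (-s * τ) := by
    rw [← hc₁, ← exp_add]; congr 1; ring
  have hexp_q : exp (-q) = c * exp (-s * τ) := by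
    rw [← hc₂, ← exp_add]; congr 1; ring
  have hpq : p * q = (p + q) * (1 - exp (-p)) := by
    have := sq_mul_apply c τ hτ₀ ω s
    rw [hs, mul_zero, ← hexp_p] at this
    exact (sub_eq_zero.mp this.symm)
  have hle := norm_sub_le_two_of_mul_eq_add_mul_one_sub_exp hp hq
    (hp_re ▸ mul_nonneg hre hτ.le) (hq_re ▸ mul_nonneg hre hτ.le) (hexp_p.trans hexp_q.symm) hpq
  have hnorm : ‖p - q‖ = 2 * |ω * τ| := by
    rw [show p - q = -(2 * I * ((ω * τ : ℝ) : ℂ)) by push_cast; ring, norm_neg, norm_mul,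
      norm_mul, norm_I, norm_real, Real.norm_eq_abs]
    norm_num
  linarith

end delayedResonatorQuasipoly

/-- For ω > 0, k ≥ 1 and τ_k = kπ/ω, the roots ±iω of
Δ_ω(s) = s² + (2/τ_k)((−1)^k e^{−sτ_k} − 1)s + ω² have multiplicity exactly 2 and form a
pair of strictly dominant roots. -/
theorem delayed_resonator_dominant_double_roots
    (ω : ℝ) (hω : 0 < ω) (k : ℕ) (hk : 1 ≤ k)
    (τ : ℝ) (hτ : τ = k * Real.pi / ω)
    (Δω : ℂ → ℂ)
    (hΔω : ∀ s : ℂ, Δω s =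
      s ^ 2 + (2 / (τ : ℂ)) * ((-1 : ℂ) ^ k * Complex.exp (-s * τ) - 1) * s + (ω : ℂ) ^ 2) :
    (Δω (Complex.I * ω) = 0 ∧ deriv Δω (Complex.I * ω) = 0 ∧
      iteratedDeriv 2 Δω (Complex.I * ω) ≠ 0) ∧
    (Δω (-(Complex.I * ω)) = 0 ∧ deriv Δω (-(Complex.I * ω)) = 0 ∧
      iteratedDeriv 2 Δω (-(Complex.I * ω)) ≠ 0) ∧
    (∀ s : ℂ, s ≠ Complex.I * ω → s ≠ -(Complex.I * ω) → Δω s = 0 → s.re < 0) := by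
  obtain rfl : Δω = delayedResonatorQuasipoly (2 / τ) ((-1) ^ k) τ ((ω : ℂ) ^ 2) := funext hΔω
  have hτ_pos : 0 < τ := hτ ▸ by positivity
  have hωτ : ω * τ = k * Real.pi := by rw [hτ]; field_simp
  have hc₁ : exp (I * ω * τ) = (-1) ^ k := by
    rw [← exp_pi_mul_I, ← exp_nat_mul, mul_assoc, ← ofReal_mul, hωτ]; push_cast; ring_nf
  have hc₂ : exp (-(I * ω * τ)) = (-1) ^ k := by
    rw [exp_neg, hc₁, ← inv_pow, inv_neg_one]
  have hτ₀ : (τ : ℂ) ≠ 0 := ofReal_ne_zero.mpr hτ_pos.ne'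
  have hτs {s : ℂ} (hs : s.re = 0) : (τ : ℂ) * s ≠ 1 := fun h => by simpa [hs] using congrArg re h
  refine ⟨?_, ?_, fun s h₁ h₂ hs => ?_⟩
  · refine delayedResonatorQuasipoly.double_root _ _ _ hτ₀ ?_ ?_ (hτs (by simp))
    · rw [neg_mul, hc₂, ← mul_pow]; norm_num
    · linear_combination (ω : ℂ) ^ 2 * I_sq
  · refine delayedResonatorQuasipoly.double_root _ _ _ hτ₀ ?_ ?_ (hτs (by simp))
    · rw [neg_neg, hc₁, ← mul_pow]; norm_num
    · linear_combination (ω : ℂ) ^ 2 * I_sq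
  · refine delayedResonatorQuasipoly.re_neg_of_eq_zero _ hτ_pos ?_ hc₁ hc₂ hs h₁ h₂
    rw [hωτ, abs_of_pos (by positivity)]
    have : (1 : ℝ) ≤ k := by exact_mod_cast hk
    nlinarith [Real.pi_gt_three]
end

section
/- Let τ > 0 and a₁, a₀, α₁, α₀ ∈ ℝ. Then no root of Δ has multiplicity exceeding 4: there is no s₀ ∈ ℂ such that Δ(s₀), Δ'(s₀), Δ''(s₀), Δ'''(s₀), and Δ⁽⁴⁾(s₀) all vanish. -/
open Complex

/-! The exponential term `e^{cs}(α₁ s + α₀)` (with `c = -τ`) has `n`-th derivative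
`e^{cs}(cⁿ q + n cⁿ⁻¹ α₁)`, `q = α₁ s + α₀`, while the quadratic part only contributes the
constant `2` to `Δ''` and nothing from `Δ'''` on. Vanishing of `Δ'''` and `Δ⁽⁴⁾` at `s₀` forces
the exponential part of `Δ''(s₀)` to vanish, leaving `Δ''(s₀) = 2 ≠ 0`. -/

section QuadraticAdd

variable {𝕜 : Type*} [NontriviallyNormedField 𝕜] {f : 𝕜 → 𝕜}

theorem deriv_deriv_quadratic_add (hf : ContDiff 𝕜 2 f) (b a : 𝕜) :
    deriv (deriv fun s => s ^ 2 + b * s + a + f s) = fun s => 2 + deriv (deriv f) s := by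
  have hf₁ : Differentiable 𝕜 f := hf.differentiable (by norm_num)
  have hf₂ : Differentiable 𝕜 (deriv f) := (hf.iterate_deriv' 1 1).differentiable (by norm_num)
  have hderiv : deriv (fun s => s ^ 2 + b * s + a + f s) = fun s => 2 * s + b + deriv f s := by
    funext s
    have hquad : HasDerivAt (fun s => s ^ 2 + b * s + a) (2 * s + b) s := by
      simpa [mul_comm] using
        ((hasDerivAt_pow 2 s).fun_add ((hasDerivAt_id' s).const_mul b)).add_const a
    exact (hquad.fun_add (hf₁ s).hasDerivAt).deriv
  funext s
  have hlin : HasDerivAt (fun s => 2 * s + b) 2 s := by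
    simpa using ((hasDerivAt_id' s).const_mul (2 : 𝕜)).add_const b
  rw [hderiv]
  exact (hlin.fun_add (hf₂ s).hasDerivAt).deriv

theorem iteratedDeriv_two_quadratic_add (hf : ContDiff 𝕜 2 f) (b a x : 𝕜) :
    iteratedDeriv 2 (fun s => s ^ 2 + b * s + a + f s) x = 2 + iteratedDeriv 2 f x := by
  rw [iteratedDeriv_succ', iteratedDeriv_succ', iteratedDeriv_zero, deriv_deriv_quadratic_add hf,
    iteratedDeriv_succ', iteratedDeriv_succ', iteratedDeriv_zero]

theorem iteratedDeriv_quadratic_add_of_two_lt (hf : ContDiff 𝕜 2 f) (b a x : 𝕜) {n : ℕ}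
    (hn : 2 < n) :
    iteratedDeriv n (fun s => s ^ 2 + b * s + a + f s) x = iteratedDeriv n f x := by
  obtain ⟨m, rfl⟩ := Nat.exists_eq_add_of_lt hn
  rw [show 2 + m + 1 = m + 1 + 1 + 1 by omega, iteratedDeriv_succ', iteratedDeriv_succ',
    iteratedDeriv_succ' (f := f), iteratedDeriv_succ' (f := deriv f), deriv_deriv_quadratic_add hf,
    iteratedDeriv_const_add m.succ_pos]

end QuadraticAdd

theorem deriv_cexp_mul_mul_affine (c C D : ℂ) :
    deriv (fun s => exp (c * s) * (C * s + D)) =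
      fun s => exp (c * s) * (c * C * s + (c * D + C)) := by
  funext s
  have hexp : HasDerivAt (fun s => exp (c * s)) (exp (c * s) * c) s := by
    simpa using ((hasDerivAt_id' s).const_mul c).cexp
  have haff : HasDerivAt (fun s => C * s + D) C s := by
    simpa using ((hasDerivAt_id' s).const_mul C).add_const D
  exact (hexp.fun_mul haff).deriv.trans (by ring)

theorem iteratedDeriv_succ_cexp_mul_mul_affine (c C D : ℂ) (n : ℕ) :
    iteratedDeriv (n + 1) (fun s => exp (c * s) * (C * s + D)) =
      fun s => exp (c * s) * (c ^ (n + 1) * (C * s + D) + (n + 1) * c ^ n * C) := by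
  induction n with
  | zero =>
    rw [iteratedDeriv_one, deriv_cexp_mul_mul_affine]
    funext s
    push_cast
    ring
  | succ n ih =>
    have hform : (fun s => exp (c * s) * (c ^ (n + 1) * (C * s + D) + (n + 1) * c ^ n * C)) =
        fun s => exp (c * s) * (c ^ (n + 1) * C * s + (c ^ (n + 1) * D + (n + 1) * c ^ n * C)) := by
      funext s
      ring
    rw [iteratedDeriv_succ, ih, hform, deriv_cexp_mul_mul_affine]
    funext s
    push_cast
    ring

theorem sq_mul_add_two_mul_mul_eq_zero {R : Type*} [CommRing R] [NoZeroDivisors R] {c q C : R}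
    (h₃ : c ^ 3 * q + 3 * c ^ 2 * C = 0) (h₄ : c ^ 4 * q + 4 * c ^ 3 * C = 0) :
    c ^ 2 * q + 2 * c * C = 0 := by
  apply (pow_eq_zero_iff (n := 3) (by norm_num)).mp
  -- `(c²q + 2cC)³ = (cq + 2C)² (2c·h₃ - h₄)`, which avoids a case split on `c = 0`
  linear_combination (c * q + 2 * C) ^ 2 * (2 * c * h₃ - h₄)

theorem no_root_of_multiplicity_five_general
    (τ a₁ a₀ α₁ α₀ : ℝ)
    (Δ : ℂ → ℂ)
    (hΔ : ∀ s : ℂ, Δ s = s ^ 2 + a₁ * s + a₀ + Complex.exp (-s * τ) * (α₁ * s + α₀)) :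
    ¬ ∃ s₀ : ℂ, Δ s₀ = 0 ∧ deriv Δ s₀ = 0 ∧ iteratedDeriv 2 Δ s₀ = 0 ∧
      iteratedDeriv 3 Δ s₀ = 0 ∧ iteratedDeriv 4 Δ s₀ = 0 := by
  rintro ⟨s₀, -, -, h₂, h₃, h₄⟩
  set E : ℂ → ℂ := fun s => exp (-τ * s) * (α₁ * s + α₀) with hE
  have hΔE : Δ = fun s => s ^ 2 + a₁ * s + a₀ + E s := by
    funext s
    rw [hΔ, neg_mul_comm, mul_comm s]
  have hEsmooth : ContDiff ℂ 2 E := by fun_prop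
  have hEderiv := iteratedDeriv_succ_cexp_mul_mul_affine (-τ) α₁ α₀
  rw [hΔE, iteratedDeriv_two_quadratic_add hEsmooth, hE, hEderiv 1] at h₂
  rw [hΔE, iteratedDeriv_quadratic_add_of_two_lt hEsmooth _ _ _ (by norm_num), hE, hEderiv 2] at h₃
  rw [hΔE, iteratedDeriv_quadratic_add_of_two_lt hEsmooth _ _ _ (by norm_num), hE, hEderiv 3] at h₄
  push_cast at h₂ h₃ h₄
  have hcoeff : (-τ : ℂ) ^ 2 * (α₁ * s₀ + α₀) + 2 * (-τ) * α₁ = 0 :=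
    sq_mul_add_two_mul_mul_eq_zero
      (by linear_combination (mul_eq_zero.mp h₃).resolve_left (exp_ne_zero _))
      (by linear_combination (mul_eq_zero.mp h₄).resolve_left (exp_ne_zero _))
  have htwo : (2 : ℂ) = 0 := by linear_combination h₂ - exp (-τ * s₀) * hcoeff
  exact two_ne_zero htwo

/-- Pólya–Szegő bound for Δ: no root of Δ has multiplicity exceeding 4:
there is no s₀ at which Δ and its first four derivatives all vanish. -/
theorem no_root_of_multiplicity_five
    (τ a₁ a₀ α₁ α₀ : ℝ) (hτ : 0 < τ)
    (Δ : ℂ → ℂ)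
    (hΔ : ∀ s : ℂ, Δ s = s ^ 2 + a₁ * s + a₀ + Complex.exp (-s * τ) * (α₁ * s + α₀)) :
    ¬ ∃ s₀ : ℂ, Δ s₀ = 0 ∧ deriv Δ s₀ = 0 ∧ iteratedDeriv 2 Δ s₀ = 0 ∧
      iteratedDeriv 3 Δ s₀ = 0 ∧ iteratedDeriv 4 Δ s₀ = 0 :=
  no_root_of_multiplicity_five_general τ a₁ a₀ α₁ α₀ Δ hΔ
end

section
/- For each fixed z ∈ ℂ, the value Δ̂_C(z; θ₀) converges to Δ̂_R(z) as θ₀ → 0 along θ₀ ≠ 0, where for θ₀ ≠ 0, Δ̂_C(z; θ₀) = z² − 2θ₀(θ₀ − sin θ₀ cos θ₀)/(θ₀² − sin²θ₀)·z + θ₀²(θ₀² + sin²θ₀)/(θ₀² − sin²θ₀) + e^{−z}( 2θ₀(θ₀ cos θ₀ − sin θ₀)/(θ₀² − sin²θ₀)·z − 2θ₀³ sin θ₀/(θ₀² − sin²θ₀) ), and Δ̂_R(z) = z² − 4z + 6 − e^{−z}(2z + 6). -/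
open Complex Filter Topology

/-!
Write `sin x = x - x ^ 3 * u x` and `cos x = 1 - x ^ 2 * v x`; the Taylor bounds give
`u → 1/6` and `v → 1/2`. Then `θ² - sin² θ = θ⁴ u (2 - θ² u)`, and each numerator of the four
coefficients of `Δ̂_C` is `θ⁴` times a polynomial in `θ, u, v`, so after cancelling `θ⁴` the
coefficients tend to `4, 6, -2, 6`, which are those of `Δ̂_R`.
-/

theorem tendsto_nhdsNE_zero_of_abs_sub_le_mul_sq {f : ℝ → ℝ} {c K : ℝ}
    (h : ∀ᶠ x in 𝓝[≠] 0, |f x - c| ≤ K * x ^ 2) : Tendsto f (𝓝[≠] 0) (𝓝 c) := by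
  have hK : Tendsto (fun x : ℝ ↦ K * x ^ 2) (𝓝[≠] 0) (𝓝 0) := by
    have hcont : Continuous fun x : ℝ ↦ K * x ^ 2 := by fun_prop
    exact (hcont.tendsto' 0 0 (by simp)).mono_left nhdsWithin_le_nhds
  exact tendsto_sub_nhds_zero_iff.1 (squeeze_zero_norm' h hK)

theorem eventually_nhdsNE_zero_abs_le_one : ∀ᶠ x : ℝ in 𝓝[≠] 0, x ≠ 0 ∧ |x| ≤ 1 := by
  filter_upwards [self_mem_nhdsWithin,
    eventually_nhdsWithin_of_eventually_nhds (Metric.closedBall_mem_nhds (0 : ℝ) one_pos)]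
    with x hx0 hx1
  exact ⟨hx0, by simpa using hx1⟩

theorem tendsto_id_nhdsNE_zero : Tendsto (fun x : ℝ ↦ x) (𝓝[≠] 0) (𝓝 0) :=
  tendsto_id.mono_left nhdsWithin_le_nhds

theorem tendsto_div_of_eq_pow_mul {N D n d : ℝ → ℝ} {a b : ℝ} (k : ℕ)
    (hN : ∀ x, N x = x ^ k * n x) (hD : ∀ x, D x = x ^ k * d x)
    (hn : Tendsto n (𝓝[≠] 0) (𝓝 a)) (hd : Tendsto d (𝓝[≠] 0) (𝓝 b)) (hb : b ≠ 0) :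
    Tendsto (fun x ↦ N x / D x) (𝓝[≠] 0) (𝓝 (a / b)) := by
  refine (hn.div hd hb).congr' ?_
  filter_upwards [self_mem_nhdsWithin] with x hx
  rw [Pi.div_apply, hN, hD, mul_div_mul_left _ _ (pow_ne_zero k hx)]

namespace Real

/-- At `x = 0` the division returns `0`, and the two expansions below still hold there. -/
noncomputable def sinCubicCoeff (x : ℝ) : ℝ := (x - sin x) / x ^ 3

noncomputable def cosQuadraticCoeff (x : ℝ) : ℝ := (1 - cos x) / x ^ 2

local notation "u" => sinCubicCoeff
local notation "v" => cosQuadraticCoeff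

theorem sin_eq_sub_sinCubicCoeff (x : ℝ) : sin x = x - x ^ 3 * u x := by
  rcases eq_or_ne x 0 with rfl | hx
  · simp
  · rw [sinCubicCoeff]; field_simp; ring

theorem cos_eq_sub_cosQuadraticCoeff (x : ℝ) : cos x = 1 - x ^ 2 * v x := by
  rcases eq_or_ne x 0 with rfl | hx
  · simp
  · rw [cosQuadraticCoeff]; field_simp; ring

theorem tendsto_sinCubicCoeff : Tendsto u (𝓝[≠] 0) (𝓝 (1 / 6)) := by
  refine tendsto_nhdsNE_zero_of_abs_sub_le_mul_sq (K := 1 / 100) ?_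
  filter_upwards [eventually_nhdsNE_zero_abs_le_one] with x ⟨hx0, hx1⟩
  have hx : 0 < |x| := abs_pos.2 hx0
  have hsub : u x - 1 / 6 = -((sin x - (x - x ^ 3 / 6)) / x ^ 3) := by
    rw [sinCubicCoeff]; field_simp; ring
  rw [hsub, abs_neg, abs_div, abs_pow, div_le_iff₀ (by positivity)]
  calc |sin x - (x - x ^ 3 / 6)| ≤ |x| ^ 5 / 100 := sin_bound hx1
    _ = 1 / 100 * x ^ 2 * |x| ^ 3 := by rw [← sq_abs x]; ring

theorem tendsto_cosQuadraticCoeff : Tendsto v (𝓝[≠] 0) (𝓝 (1 / 2)) := by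
  refine tendsto_nhdsNE_zero_of_abs_sub_le_mul_sq (K := 5 / 96) ?_
  filter_upwards [eventually_nhdsNE_zero_abs_le_one] with x ⟨hx0, hx1⟩
  have hx : 0 < |x| := abs_pos.2 hx0
  have hsub : v x - 1 / 2 = -((cos x - (1 - x ^ 2 / 2)) / x ^ 2) := by
    rw [cosQuadraticCoeff]; field_simp; ring
  rw [hsub, abs_neg, abs_div, abs_pow, div_le_iff₀ (by positivity)]
  calc |cos x - (1 - x ^ 2 / 2)| ≤ |x| ^ 4 * (5 / 96) := cos_bound hx1
    _ = 5 / 96 * x ^ 2 * |x| ^ 2 := by rw [← sq_abs x]; ring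

theorem sq_sub_sin_sq_eq (x : ℝ) : x ^ 2 - sin x ^ 2 = x ^ 4 * (u x * (2 - x ^ 2 * u x)) := by
  rw [sin_eq_sub_sinCubicCoeff]; ring

theorem tendsto_sq_sub_sin_sq_div_pow_four :
    Tendsto (fun x ↦ u x * (2 - x ^ 2 * u x)) (𝓝[≠] 0) (𝓝 (1 / 3)) := by
  have hu := tendsto_sinCubicCoeff
  convert hu.mul (tendsto_const_nhds.sub ((tendsto_id_nhdsNE_zero.pow 2).mul hu)) using 2
  norm_num

theorem tendsto_mul_sub_sin_mul_cos_div :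
    Tendsto (fun x ↦ 2 * x * (x - sin x * cos x) / (x ^ 2 - sin x ^ 2)) (𝓝[≠] 0) (𝓝 4) := by
  have hn : Tendsto (fun x ↦ 2 * (u x + v x - x ^ 2 * u x * v x)) (𝓝[≠] 0) (𝓝 (4 / 3)) := by
    convert ((tendsto_sinCubicCoeff.add tendsto_cosQuadraticCoeff).sub
      (((tendsto_id_nhdsNE_zero.pow 2).mul tendsto_sinCubicCoeff).mul
        tendsto_cosQuadraticCoeff)).const_mul 2 using 2
    norm_num
  refine (tendsto_div_of_eq_pow_mul 4 (fun x ↦ ?_) sq_sub_sin_sq_eq hn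
    tendsto_sq_sub_sin_sq_div_pow_four (by norm_num)).mono_right (by norm_num)
  rw [sin_eq_sub_sinCubicCoeff, cos_eq_sub_cosQuadraticCoeff]; ring

theorem tendsto_sq_mul_sq_add_sin_sq_div :
    Tendsto (fun x ↦ x ^ 2 * (x ^ 2 + sin x ^ 2) / (x ^ 2 - sin x ^ 2)) (𝓝[≠] 0) (𝓝 6) := by
  have hn : Tendsto (fun x ↦ 1 + (1 - x ^ 2 * u x) ^ 2) (𝓝[≠] 0) (𝓝 2) := by
    convert tendsto_const_nhds.add ((tendsto_const_nhds.sub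
      ((tendsto_id_nhdsNE_zero.pow 2).mul tendsto_sinCubicCoeff)).pow 2) using 2
    norm_num
  refine (tendsto_div_of_eq_pow_mul 4 (fun x ↦ ?_) sq_sub_sin_sq_eq hn
    tendsto_sq_sub_sin_sq_div_pow_four (by norm_num)).mono_right (by norm_num)
  rw [sin_eq_sub_sinCubicCoeff]; ring

theorem tendsto_mul_mul_cos_sub_sin_div :
    Tendsto (fun x ↦ 2 * x * (x * cos x - sin x) / (x ^ 2 - sin x ^ 2)) (𝓝[≠] 0) (𝓝 (-2)) := by
  have hn : Tendsto (fun x ↦ 2 * (u x - v x)) (𝓝[≠] 0) (𝓝 (-2 / 3)) := by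
    convert (tendsto_sinCubicCoeff.sub tendsto_cosQuadraticCoeff).const_mul 2 using 2
    norm_num
  refine (tendsto_div_of_eq_pow_mul 4 (fun x ↦ ?_) sq_sub_sin_sq_eq hn
    tendsto_sq_sub_sin_sq_div_pow_four (by norm_num)).mono_right (by norm_num)
  rw [sin_eq_sub_sinCubicCoeff, cos_eq_sub_cosQuadraticCoeff]; ring

theorem tendsto_pow_three_mul_sin_div :
    Tendsto (fun x ↦ 2 * x ^ 3 * sin x / (x ^ 2 - sin x ^ 2)) (𝓝[≠] 0) (𝓝 6) := by
  have hn : Tendsto (fun x ↦ 2 * (1 - x ^ 2 * u x)) (𝓝[≠] 0) (𝓝 2) := by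
    convert (tendsto_const_nhds.sub
      ((tendsto_id_nhdsNE_zero.pow 2).mul tendsto_sinCubicCoeff)).const_mul 2 using 2
    norm_num
  refine (tendsto_div_of_eq_pow_mul 4 (fun x ↦ ?_) sq_sub_sin_sq_eq hn
    tendsto_sq_sub_sin_sq_div_pow_four (by norm_num)).mono_right (by norm_num)
  rw [sin_eq_sub_sinCubicCoeff]; ring

end Real

/-- For fixed z ∈ ℂ, Δ̂_C(z; θ₀) converges to Δ̂_R(z) as θ₀ → 0 along
θ₀ ≠ 0. -/
theorem normalized_quasipolynomial_limit
    (z : ℂ)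
    (ΔC : ℂ → ℝ → ℂ)
    (hΔC : ∀ (w : ℂ) (θ₀ : ℝ), θ₀ ≠ 0 → ΔC w θ₀ =
      w ^ 2
      - (2 * θ₀ * (θ₀ - Real.sin θ₀ * Real.cos θ₀) / (θ₀ ^ 2 - Real.sin θ₀ ^ 2) : ℝ) * w
      + (θ₀ ^ 2 * (θ₀ ^ 2 + Real.sin θ₀ ^ 2) / (θ₀ ^ 2 - Real.sin θ₀ ^ 2) : ℝ)
      + Complex.exp (-w) *
        ((2 * θ₀ * (θ₀ * Real.cos θ₀ - Real.sin θ₀) / (θ₀ ^ 2 - Real.sin θ₀ ^ 2) : ℝ) * w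
          - (2 * θ₀ ^ 3 * Real.sin θ₀ / (θ₀ ^ 2 - Real.sin θ₀ ^ 2) : ℝ)))
    (ΔR : ℂ → ℂ)
    (hΔR : ∀ w : ℂ, ΔR w = w ^ 2 - 4 * w + 6 - Complex.exp (-w) * (2 * w + 6)) :
    Tendsto (fun θ₀ : ℝ => ΔC z θ₀) (𝓝[≠] 0) (𝓝 (ΔR z)) := by
  have hlim := (((tendsto_const_nhds (x := z ^ 2)).sub
      (Real.tendsto_mul_sub_sin_mul_cos_div.ofReal.mul (tendsto_const_nhds (x := z)))).add
      Real.tendsto_sq_mul_sq_add_sin_sq_div.ofReal).add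
    ((tendsto_const_nhds (x := cexp (-z))).mul
      ((Real.tendsto_mul_mul_cos_sub_sin_div.ofReal.mul (tendsto_const_nhds (x := z))).sub
        Real.tendsto_pow_three_mul_sin_div.ofReal))
  convert hlim.congr' ?_ using 2
  · rw [hΔR]; push_cast; ring
  · filter_upwards [self_mem_nhdsWithin] with θ₀ hθ₀ using (hΔC z θ₀ hθ₀).symm
end
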